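/- arXiv:2104.14519 — 5 statements merged into one kernel-verified Lean document; each statement's English description precedes it below -/
import Mathlib

section
/- Let X₁ ~ Lap(k₁, μ₁) and X₂ ~ Lap(k₂, μ₂) be independent Laplace random variables with k₁ = k₂ = k > 0. Then P(X₁ ≤ X₂) = (1/2)·[1 + sgn(μ₂-μ₁)·(1 - e^{-k|μ₂-μ₁|}·(1 + (k/2)·|μ₂-μ₁|))]. -/
open Real MeasureTheory Set

lemma expIoi_int (b a : ℝ) (hb : 0 < b) :
    IntegrableOn (fun x => Real.exp (-(b * x))) (Set.Ioi a) := by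
  simpa [neg_mul] using exp_neg_integrableOn_Ioi a hb

lemma expIoi (b a : ℝ) (hb : 0 < b) :
    ∫ x in Set.Ioi a, Real.exp (-(b * x)) = Real.exp (-(b * a)) / b := by
  have h := integral_comp_mul_left_Ioi (fun x => Real.exp (-x)) a hb
  simp only [smul_eq_mul] at h
  rw [h, integral_exp_neg_Ioi]
  field_simp

lemma expIic (b a : ℝ) (hb : 0 < b) :
    ∫ x in Set.Iic a, Real.exp (b * x) = Real.exp (b * a) / b := by
  have h := integral_comp_neg_Iic a (fun x => Real.exp (-(b * x)))
  simp only [mul_neg, neg_neg] at h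
  rw [h, expIoi b (-a) hb]
  ring_nf

lemma expIic_int (b a : ℝ) (hb : 0 < b) :
    IntegrableOn (fun x => Real.exp (b * x)) (Set.Iic a) := by
  have m : MeasurableEmbedding fun x : ℝ => -x := (Homeomorph.neg ℝ).measurableEmbedding
  have h1 : IntegrableOn (fun x => Real.exp (-(b * x))) (Set.Ici (-a)) :=
    (integrableOn_Ici_iff_integrableOn_Ioi).mpr (expIoi_int b (-a) hb)
  have h2 : IntegrableOn (fun x => Real.exp (b * x)) (Set.Iic a)
      (Measure.map (fun x : ℝ => -x) volume) :=
    m.integrableOn_map_iff.mpr (by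
      simpa [Function.comp_def, mul_neg] using h1)
  simpa [Measure.map_neg_eq_self] using h2

lemma expInterval (c a b : ℝ) (hc : c ≠ 0) :
    ∫ x in a..b, Real.exp (c * x) = (Real.exp (c * b) - Real.exp (c * a)) / c := by
  rw [intervalIntegral.integral_comp_mul_left (fun x => Real.exp x) hc,
    integral_exp, smul_eq_mul]
  field_simp

-- inner integral, case x ≥ μ
lemma inner_ge (k μ x : ℝ) (hk : 0 < k) (hx : μ ≤ x) :
    ∫ y in Set.Ici x, (k / 2) * Real.exp (-k * |y - μ|)
      = (1 / 2) * Real.exp (-k * (x - μ)) := by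
  rw [integral_Ici_eq_integral_Ioi]
  have hcongr : ∀ y ∈ Set.Ioi x, (k / 2) * Real.exp (-k * |y - μ|)
      = ((k / 2) * Real.exp (k * μ)) * Real.exp (-(k * y)) := by
    intro y hy
    rw [abs_of_nonneg (by simp only [Set.mem_Ioi] at hy; linarith)]
    rw [mul_assoc, ← Real.exp_add]
    ring_nf
  rw [setIntegral_congr_fun measurableSet_Ioi hcongr, integral_const_mul,
    expIoi k x hk]
  rw [show (-k * (x - μ)) = k * μ + -(k * x) by ring, Real.exp_add]
  field_simp

lemma lap_int (k μ : ℝ) (hk : 0 < k) :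
    Integrable (fun y => (k / 2) * Real.exp (-k * |y - μ|)) := by
  rw [← integrableOn_univ, ← Set.Iic_union_Ioi (a := μ), integrableOn_union]
  constructor
  · refine IntegrableOn.congr_fun ((expIic_int k μ hk).const_mul ((k / 2) * Real.exp (-(k * μ))))
      ?_ measurableSet_Iic
    intro y hy
    simp only [Set.mem_Iic] at hy
    show (k / 2) * Real.exp (-(k * μ)) * Real.exp (k * y) = (k / 2) * Real.exp (-k * |y - μ|)
    rw [abs_of_nonpos (by linarith : y - μ ≤ 0), mul_assoc, ← Real.exp_add]
    ring_nf
  · refine IntegrableOn.congr_fun ((expIoi_int k μ hk).const_mul ((k / 2) * Real.exp (k * μ)))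
      ?_ measurableSet_Ioi
    intro y hy
    simp only [Set.mem_Ioi] at hy
    show (k / 2) * Real.exp (k * μ) * Real.exp (-(k * y)) = (k / 2) * Real.exp (-k * |y - μ|)
    rw [abs_of_nonneg (by linarith : 0 ≤ y - μ), mul_assoc, ← Real.exp_add]
    ring_nf

lemma inner_le (k μ x : ℝ) (hk : 0 < k) (hx : x ≤ μ) :
    ∫ y in Set.Ici x, (k / 2) * Real.exp (-k * |y - μ|)
      = 1 - (1 / 2) * Real.exp (-k * (μ - x)) := by
  have hsplit : Set.Ico x μ ∪ Set.Ici μ = Set.Ici x := Set.Ico_union_Ici_eq_Ici hx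
  have hdisj : Disjoint (Set.Ico x μ) (Set.Ici μ) :=
    (Set.Iio_disjoint_Ici le_rfl).mono_left Set.Ico_subset_Iio_self
  rw [← hsplit, setIntegral_union hdisj measurableSet_Ici
    ((lap_int k μ hk).integrableOn) ((lap_int k μ hk).integrableOn)]
  have h2 : ∫ y in Set.Ici μ, (k / 2) * Real.exp (-k * |y - μ|) = 1 / 2 := by
    rw [inner_ge k μ μ hk le_rfl]; simp
  have hcongr : ∀ y ∈ Set.Ico x μ, (k / 2) * Real.exp (-k * |y - μ|)
      = ((k / 2) * Real.exp (-(k * μ))) * Real.exp (k * y) := by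
    intro y hy
    obtain ⟨_, hy2⟩ := hy
    rw [abs_of_nonpos (by linarith), mul_assoc, ← Real.exp_add]
    ring_nf
  rw [setIntegral_congr_fun measurableSet_Ico hcongr, integral_const_mul, h2,
    Measure.restrict_congr_set Ico_ae_eq_Ioc,
    ← intervalIntegral.integral_of_le hx, expInterval k x μ hk.ne']
  rw [show (-k * (μ - x)) = -(k * μ) + k * x by ring, Real.exp_add]
  have he : Real.exp (-(k * μ)) * Real.exp (k * μ) = 1 := by rw [← Real.exp_add]; simp
  field_simp
  linear_combination he

lemma outer_nonneg (k δ : ℝ) (hk : 0 < k) (hδ : 0 ≤ δ) :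
    ∫ x : ℝ, (k / 2) * Real.exp (-k * |x|) *
        (if x ≤ δ then 1 - (1 / 2) * Real.exp (-k * (δ - x))
          else (1 / 2) * Real.exp (-k * (x - δ)))
      = 1 - Real.exp (-k * δ) * (1 / 2 + k * δ / 4) := by
  set F : ℝ → ℝ := fun x => (k / 2) * Real.exp (-k * |x|) *
      (if x ≤ δ then 1 - (1 / 2) * Real.exp (-k * (δ - x))
        else (1 / 2) * Real.exp (-k * (x - δ))) with hF
  have h2k : (0:ℝ) < 2 * k := by linarith
  -- explicit forms
  have e1 : ∀ x ∈ Set.Iic (0:ℝ), F x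
      = (k / 2) * Real.exp (k * x) - ((k / 4) * Real.exp (-(k * δ))) * Real.exp ((2 * k) * x) := by
    intro x hx
    simp only [Set.mem_Iic] at hx
    rw [hF]
    simp only [abs_of_nonpos hx, if_pos (le_trans hx hδ)]
    rw [show -k * -x = k * x by ring]
    have h2 : Real.exp (k * x) * Real.exp (-k * (δ - x))
        = Real.exp (-(k * δ)) * Real.exp ((2 * k) * x) := by
      rw [← Real.exp_add, ← Real.exp_add]; ring_nf
    linear_combination (-(k / 4)) * h2
  have e2 : ∀ x ∈ Set.Ioc (0:ℝ) δ, F x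
      = (k / 2) * Real.exp (-k * x) - (k / 4) * Real.exp (-(k * δ)) := by
    intro x hx
    obtain ⟨hx1, hx2⟩ := hx
    rw [hF]
    simp only [abs_of_pos hx1, if_pos hx2]
    have h2 : Real.exp (-k * x) * Real.exp (-k * (δ - x)) = Real.exp (-(k * δ)) := by
      rw [← Real.exp_add]; ring_nf
    linear_combination (-(k / 4)) * h2
  have e3 : ∀ x ∈ Set.Ioi δ, F x
      = ((k / 4) * Real.exp (k * δ)) * Real.exp (-((2 * k) * x)) := by
    intro x hx
    simp only [Set.mem_Ioi] at hx
    rw [hF]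
    simp only [abs_of_pos (lt_of_le_of_lt hδ hx), if_neg (not_le.mpr hx)]
    have h2 : Real.exp (-k * x) * Real.exp (-k * (x - δ))
        = Real.exp (k * δ) * Real.exp (-((2 * k) * x)) := by
      rw [← Real.exp_add, ← Real.exp_add]; ring_nf
    linear_combination (k / 4) * h2
  -- integrability
  have i1 : IntegrableOn F (Set.Iic 0) := by
    refine IntegrableOn.congr_fun
      (((expIic_int k 0 hk).const_mul (k / 2)).sub
        ((expIic_int (2 * k) 0 h2k).const_mul ((k / 4) * Real.exp (-(k * δ)))))
      (fun x hx => (e1 x hx).symm) measurableSet_Iic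
  have c2 : Continuous fun x : ℝ => (k / 2) * Real.exp (-k * x) :=
    continuous_const.mul (Real.continuous_exp.comp (continuous_const.mul continuous_id))
  have i2 : IntegrableOn F (Set.Ioc 0 δ) := by
    refine IntegrableOn.congr_fun ?_ (fun x hx => (e2 x hx).symm) measurableSet_Ioc
    exact (c2.sub continuous_const).integrableOn_Ioc
  have i3 : IntegrableOn F (Set.Ioi δ) := by
    refine IntegrableOn.congr_fun
      ((expIoi_int (2 * k) δ h2k).const_mul ((k / 4) * Real.exp (k * δ)))
      (fun x hx => (e3 x hx).symm) measurableSet_Ioi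
  have hsplit2 : Set.Ioc 0 δ ∪ Set.Ioi δ = Set.Ioi 0 := Set.Ioc_union_Ioi_eq_Ioi hδ
  have iR : IntegrableOn F (Set.Ioi 0) := by
    rw [← hsplit2, integrableOn_union]; exact ⟨i2, i3⟩
  -- split
  rw [← intervalIntegral.integral_Iic_add_Ioi i1 iR, ← hsplit2,
    setIntegral_union Set.Ioc_disjoint_Ioi_same measurableSet_Ioi i2 i3]
  -- compute piece 1
  have v1 : ∫ x in Set.Iic (0:ℝ), F x = 1 / 2 - Real.exp (-(k * δ)) / 8 := by
    rw [setIntegral_congr_fun measurableSet_Iic e1, integral_sub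
      ((expIic_int k 0 hk).const_mul (k / 2))
      ((expIic_int (2 * k) 0 h2k).const_mul ((k / 4) * Real.exp (-(k * δ)))),
      integral_const_mul, integral_const_mul, expIic k 0 hk, expIic (2 * k) 0 h2k]
    simp only [mul_zero, Real.exp_zero]
    field_simp
    ring
  have v2 : ∫ x in Set.Ioc (0:ℝ) δ, F x
      = 1 / 2 - (1 / 2) * Real.exp (-(k * δ)) - (k * δ / 4) * Real.exp (-(k * δ)) := by
    rw [setIntegral_congr_fun measurableSet_Ioc e2, ← intervalIntegral.integral_of_le hδ,
      intervalIntegral.integral_sub (c2.intervalIntegrable 0 δ)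
        intervalIntegrable_const]
    rw [intervalIntegral.integral_const_mul, expInterval (-k) 0 δ (by linarith : (-k:ℝ) ≠ 0),
      intervalIntegral.integral_const]
    simp only [mul_zero, Real.exp_zero, neg_mul, smul_eq_mul, sub_zero]
    field_simp
    ring
  have v3 : ∫ x in Set.Ioi δ, F x = Real.exp (-(k * δ)) / 8 := by
    rw [setIntegral_congr_fun measurableSet_Ioi e3, integral_const_mul,
      expIoi (2 * k) δ h2k]
    have h2 : Real.exp (k * δ) * Real.exp (-(2 * k * δ)) = Real.exp (-(k * δ)) := by
      rw [← Real.exp_add]; ring_nf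
    field_simp
    linear_combination (norm := ring_nf) 8 * h2
  rw [v1, v2, v3]
  rw [show -k * δ = -(k * δ) by ring]
  ring

lemma outer_neg (k δ : ℝ) (hk : 0 < k) (hδ : δ < 0) :
    ∫ x : ℝ, (k / 2) * Real.exp (-k * |x|) *
        (if x ≤ δ then 1 - (1 / 2) * Real.exp (-k * (δ - x))
          else (1 / 2) * Real.exp (-k * (x - δ)))
      = Real.exp (k * δ) * (1 / 2 - k * δ / 4) := by
  set F : ℝ → ℝ := fun x => (k / 2) * Real.exp (-k * |x|) *
      (if x ≤ δ then 1 - (1 / 2) * Real.exp (-k * (δ - x))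
        else (1 / 2) * Real.exp (-k * (x - δ))) with hF
  have h2k : (0:ℝ) < 2 * k := by linarith
  have e1 : ∀ x ∈ Set.Iic δ, F x
      = (k / 2) * Real.exp (k * x) - ((k / 4) * Real.exp (-(k * δ))) * Real.exp ((2 * k) * x) := by
    intro x hx
    simp only [Set.mem_Iic] at hx
    rw [hF]
    simp only [abs_of_nonpos (le_trans hx hδ.le), if_pos hx]
    rw [show -k * -x = k * x by ring]
    have h2 : Real.exp (k * x) * Real.exp (-k * (δ - x))
        = Real.exp (-(k * δ)) * Real.exp ((2 * k) * x) := by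
      rw [← Real.exp_add, ← Real.exp_add]; ring_nf
    linear_combination (-(k / 4)) * h2
  have e2 : ∀ x ∈ Set.Ioc δ (0:ℝ), F x = (k / 4) * Real.exp (k * δ) := by
    intro x hx
    obtain ⟨hx1, hx2⟩ := hx
    rw [hF]
    simp only [abs_of_nonpos hx2, if_neg (not_le.mpr hx1)]
    rw [show -k * -x = k * x by ring]
    have h2 : Real.exp (k * x) * Real.exp (-k * (x - δ)) = Real.exp (k * δ) := by
      rw [← Real.exp_add]; ring_nf
    linear_combination (k / 4) * h2
  have e3 : ∀ x ∈ Set.Ioi (0:ℝ), F x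
      = ((k / 4) * Real.exp (k * δ)) * Real.exp (-((2 * k) * x)) := by
    intro x hx
    simp only [Set.mem_Ioi] at hx
    rw [hF]
    simp only [abs_of_pos hx, if_neg (by linarith : ¬ x ≤ δ)]
    have h2 : Real.exp (-k * x) * Real.exp (-k * (x - δ))
        = Real.exp (k * δ) * Real.exp (-((2 * k) * x)) := by
      rw [← Real.exp_add, ← Real.exp_add]; ring_nf
    linear_combination (k / 4) * h2
  have i1 : IntegrableOn F (Set.Iic δ) := by
    refine IntegrableOn.congr_fun
      (((expIic_int k δ hk).const_mul (k / 2)).sub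
        ((expIic_int (2 * k) δ h2k).const_mul ((k / 4) * Real.exp (-(k * δ)))))
      (fun x hx => (e1 x hx).symm) measurableSet_Iic
  have i2 : IntegrableOn F (Set.Ioc δ 0) := by
    refine IntegrableOn.congr_fun ?_ (fun x hx => (e2 x hx).symm) measurableSet_Ioc
    exact integrableOn_const measure_Ioc_lt_top.ne
  have i3 : IntegrableOn F (Set.Ioi 0) := by
    refine IntegrableOn.congr_fun
      ((expIoi_int (2 * k) 0 h2k).const_mul ((k / 4) * Real.exp (k * δ)))
      (fun x hx => (e3 x hx).symm) measurableSet_Ioi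
  have hsplit2 : Set.Ioc δ 0 ∪ Set.Ioi (0:ℝ) = Set.Ioi δ := Set.Ioc_union_Ioi_eq_Ioi hδ.le
  have iR : IntegrableOn F (Set.Ioi δ) := by
    rw [← hsplit2, integrableOn_union]; exact ⟨i2, i3⟩
  rw [← intervalIntegral.integral_Iic_add_Ioi i1 iR, ← hsplit2,
    setIntegral_union Set.Ioc_disjoint_Ioi_same measurableSet_Ioi i2 i3]
  have v1 : ∫ x in Set.Iic δ, F x = (3 / 8) * Real.exp (k * δ) := by
    rw [setIntegral_congr_fun measurableSet_Iic e1, integral_sub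
      ((expIic_int k δ hk).const_mul (k / 2))
      ((expIic_int (2 * k) δ h2k).const_mul ((k / 4) * Real.exp (-(k * δ)))),
      integral_const_mul, integral_const_mul, expIic k δ hk, expIic (2 * k) δ h2k]
    have h2 : Real.exp (-(k * δ)) * Real.exp (2 * k * δ) = Real.exp (k * δ) := by
      rw [← Real.exp_add]; ring_nf
    field_simp
    linear_combination (norm := ring_nf) (-8) * h2
  have v2 : ∫ x in Set.Ioc δ (0:ℝ), F x = (-δ) * ((k / 4) * Real.exp (k * δ)) := by
    rw [setIntegral_congr_fun measurableSet_Ioc e2, setIntegral_const, smul_eq_mul,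
      Real.volume_real_Ioc_of_le hδ.le]
    ring_nf
  have v3 : ∫ x in Set.Ioi (0:ℝ), F x = Real.exp (k * δ) / 8 := by
    rw [setIntegral_congr_fun measurableSet_Ioi e3, integral_const_mul,
      expIoi (2 * k) 0 h2k]
    rw [mul_zero, neg_zero, Real.exp_zero]
    field_simp
    ring
  rw [v1, v2, v3]
  ring

/-- Ordering probability for two independent Laplace random variables with equal
scaling parameter k: P(X₁ ≤ X₂). -/
theorem laplace_le_prob_eq_scale (k μ₁ μ₂ : ℝ) (hk : 0 < k) :
    (∫ x : ℝ, ((k / 2) * Real.exp (-k * |x - μ₁|)) *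
        (∫ y in Set.Ici x, (k / 2) * Real.exp (-k * |y - μ₂|))) =
      (1 / 2) * (1 + Real.sign (μ₂ - μ₁) *
        (1 - Real.exp (-k * |μ₂ - μ₁|) * (1 + (k / 2) * |μ₂ - μ₁|))) := by
  set δ : ℝ := μ₂ - μ₁ with hδdef
  have hfun : ∀ x : ℝ, ((k / 2) * Real.exp (-k * |x - μ₁|)) *
      (∫ y in Set.Ici x, (k / 2) * Real.exp (-k * |y - μ₂|))
      = (k / 2) * Real.exp (-k * |x - μ₁|) *
        (if x - μ₁ ≤ δ then 1 - (1 / 2) * Real.exp (-k * (δ - (x - μ₁)))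
          else (1 / 2) * Real.exp (-k * ((x - μ₁) - δ))) := by
    intro x
    rcases le_or_gt x μ₂ with h | h
    · rw [inner_le k μ₂ x hk h, if_pos (by rw [hδdef]; linarith),
        show δ - (x - μ₁) = μ₂ - x by rw [hδdef]; ring]
    · rw [inner_ge k μ₂ x hk h.le,
        if_neg (not_le.mpr (by rw [hδdef]; linarith)),
        show (x - μ₁) - δ = x - μ₂ by rw [hδdef]; ring]
  have key : (∫ x : ℝ, ((k / 2) * Real.exp (-k * |x - μ₁|)) *
        (∫ y in Set.Ici x, (k / 2) * Real.exp (-k * |y - μ₂|)))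
      = ∫ x : ℝ, (k / 2) * Real.exp (-k * |x|) *
        (if x ≤ δ then 1 - (1 / 2) * Real.exp (-k * (δ - x))
          else (1 / 2) * Real.exp (-k * (x - δ))) := by
    rw [← integral_sub_right_eq_self (fun x => (k / 2) * Real.exp (-k * |x|) *
        (if x ≤ δ then 1 - (1 / 2) * Real.exp (-k * (δ - x))
          else (1 / 2) * Real.exp (-k * (x - δ)))) μ₁]
    exact integral_congr_ae (Filter.Eventually.of_forall hfun)
  rw [key]
  rcases lt_trichotomy δ 0 with h | h | h
  · rw [outer_neg k δ hk h, Real.sign_of_neg h, abs_of_neg h,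
      show -k * -δ = k * δ by ring]
    ring
  · rw [h, outer_nonneg k 0 hk le_rfl]
    simp [Real.sign_zero]
    norm_num
  · rw [outer_nonneg k δ hk h.le, Real.sign_of_pos h, abs_of_pos h]
    ring
end

section
/- Let X_T ~ Lap(ε/2, 0), X₁ ~ Lap(ε/4, 0), and X₂ ~ Lap(ε/4, 1) be independent random variables (ε > 0). Then P(X₁ < X_T ∧ X₂ ≥ X_T) = (24·e^{3ε/4} - 1 + 8·e^{ε/4} - 21·e^{ε/2}) / (48·e^{3ε/4}). -/
open MeasureTheory Real Set Filter

namespace SVTAux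

/-- Integrability of `exp (c * x)` on `Iio b` for `c > 0`. -/
lemma integrableOn_exp_mul_Iio {c : ℝ} (hc : 0 < c) (b : ℝ) :
    IntegrableOn (fun x : ℝ => Real.exp (c * x)) (Set.Iio b) := by
  have h : IntegrableOn (fun x : ℝ => Real.exp (-c * x)) (Set.Ioi (-b)) :=
    exp_neg_integrableOn_Ioi _ hc
  have h2 := (MeasurePreserving.integrableOn_comp_preimage
      (Measure.measurePreserving_neg (volume : Measure ℝ))
      (Homeomorph.neg ℝ).measurableEmbedding).2 h
  have hs : (Neg.neg ⁻¹' Set.Ioi (-b) : Set ℝ) = Set.Iio b := by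
    ext x; simp
  rw [hs] at h2
  refine h2.congr_fun (fun x _ => ?_) measurableSet_Iio
  show Real.exp (-c * -x) = Real.exp (c * x)
  ring_nf

/-- Integrability of `exp (-(c * x))` on `Ici b` for `c > 0`. -/
lemma integrableOn_exp_neg_mul_Ici {c : ℝ} (hc : 0 < c) (b : ℝ) :
    IntegrableOn (fun x : ℝ => Real.exp (-(c * x))) (Set.Ici b) := by
  have h : IntegrableOn (fun x : ℝ => Real.exp (-c * x)) (Set.Ioi (b - 1)) :=
    exp_neg_integrableOn_Ioi _ hc
  refine (h.mono_set (fun x hx => ?_)).congr_fun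
    (fun x _ => show Real.exp (-c * x) = Real.exp (-(c * x)) by ring_nf) measurableSet_Ici
  exact lt_of_lt_of_le (by linarith : b - 1 < b) hx

/-- `∫ x in Iio b, exp (c * x) = exp (c * b) / c` for `c > 0`. -/
lemma integral_exp_mul_Iio {c : ℝ} (hc : 0 < c) (b : ℝ) :
    ∫ x in Set.Iio b, Real.exp (c * x) = Real.exp (c * b) / c := by
  rw [← integral_Iic_eq_integral_Iio]
  have h1 := integral_comp_neg_Iic b (fun x : ℝ => Real.exp (-(c * x)))
  have h2 : ∀ x : ℝ, Real.exp (-(c * -x)) = Real.exp (c * x) := fun x => by ring_nf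
  simp only [h2] at h1
  rw [h1]
  have h3 := integral_comp_mul_left_Ioi (fun x : ℝ => Real.exp (-x)) (-b) hc
  simp only [smul_eq_mul] at h3
  have h4 : ∀ x : ℝ, Real.exp (-(c * x)) = (fun y : ℝ => Real.exp (-y)) (c * x) := fun x => rfl
  calc ∫ x in Set.Ioi (-b), Real.exp (-(c * x))
      = c⁻¹ * ∫ x in Set.Ioi (c * -b), Real.exp (-x) := h3
    _ = Real.exp (c * b) / c := by
        rw [integral_exp_neg_Ioi]
        rw [show -(c * -b) = c * b by ring]
        rw [div_eq_inv_mul]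

/-- `∫ x in Ici b, exp (-(c * x)) = exp (-(c * b)) / c` for `c > 0`. -/
lemma integral_exp_neg_mul_Ici {c : ℝ} (hc : 0 < c) (b : ℝ) :
    ∫ x in Set.Ici b, Real.exp (-(c * x)) = Real.exp (-(c * b)) / c := by
  rw [integral_Ici_eq_integral_Ioi]
  have h3 := integral_comp_mul_left_Ioi (fun x : ℝ => Real.exp (-x)) b hc
  simp only [smul_eq_mul] at h3
  calc ∫ x in Set.Ioi b, Real.exp (-(c * x))
      = c⁻¹ * ∫ x in Set.Ioi (c * b), Real.exp (-x) := h3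
    _ = Real.exp (-(c * b)) / c := by rw [integral_exp_neg_Ioi, div_eq_inv_mul]

/-- `∫ x in Ico a b, exp (c * x) = (exp (c*b) - exp (c*a)) / c` for `c ≠ 0`. -/
lemma integral_exp_mul_Ico {c : ℝ} (hc : c ≠ 0) {a b : ℝ} (hab : a ≤ b) :
    ∫ x in Set.Ico a b, Real.exp (c * x)
      = (Real.exp (c * b) - Real.exp (c * a)) / c := by
  rw [setIntegral_congr_set Ico_ae_eq_Ioc, ← intervalIntegral.integral_of_le hab]
  rw [intervalIntegral.integral_comp_mul_left (fun x => Real.exp x) hc]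
  rw [integral_exp, smul_eq_mul]
  field_simp

/-- Laplace CDF, left case. -/
lemma laplace_cdf_le {k : ℝ} (hk : 0 < k) {μ t : ℝ} (h : t ≤ μ) :
    ∫ x in Set.Iio t, k / 2 * Real.exp (-k * |x - μ|)
      = 1 / 2 * Real.exp (k * (t - μ)) := by
  have hcong : ∀ x ∈ Set.Iio t,
      k / 2 * Real.exp (-k * |x - μ|) = k / 2 * Real.exp (-(k * μ)) * Real.exp (k * x) := by
    intro x hx
    have hxμ : x - μ < 0 := by simp only [Set.mem_Iio] at hx; linarith
    rw [abs_of_neg hxμ, show -k * -(x - μ) = -(k * μ) + k * x by ring, Real.exp_add]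
    ring
  rw [setIntegral_congr_fun measurableSet_Iio hcong, integral_const_mul,
    integral_exp_mul_Iio hk,
    show k * (t - μ) = -(k * μ) + k * t by ring, Real.exp_add]
  field_simp

/-- Laplace CDF, right case. -/
lemma laplace_cdf_ge {k : ℝ} (hk : 0 < k) {μ t : ℝ} (h : μ ≤ t) :
    ∫ x in Set.Iio t, k / 2 * Real.exp (-k * |x - μ|)
      = 1 - 1 / 2 * Real.exp (-(k * (t - μ))) := by
  have hsplit : Set.Iio μ ∪ Set.Ico μ t = Set.Iio t := Set.Iio_union_Ico_eq_Iio h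
  have hint1 : IntegrableOn (fun x => k / 2 * Real.exp (-k * |x - μ|)) (Set.Iio μ) := by
    have base : IntegrableOn (fun x => k / 2 * Real.exp (-(k * μ)) * Real.exp (k * x))
        (Set.Iio μ) := (integrableOn_exp_mul_Iio hk μ).const_mul (k / 2 * Real.exp (-(k * μ)))
    refine base.congr_fun (fun x hx => ?_) measurableSet_Iio
    have hxμ : x - μ < 0 := by simp only [Set.mem_Iio] at hx; linarith
    rw [abs_of_neg hxμ, show -k * -(x - μ) = -(k * μ) + k * x by ring, Real.exp_add]
    ring
  have hint2 : IntegrableOn (fun x => k / 2 * Real.exp (-k * |x - μ|)) (Set.Ico μ t) := by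
    apply ((Continuous.integrableOn_Icc (by fun_prop)).mono_set Set.Ico_subset_Icc_self)
  have hdisj : Disjoint (Set.Iio μ) (Set.Ico μ t) := by
    rw [Set.disjoint_left]; intro x hx hx'
    exact absurd hx'.1 (not_le.mpr hx)
  rw [← hsplit, setIntegral_union hdisj measurableSet_Ico hint1 hint2]
  have h1 : ∫ x in Set.Iio μ, k / 2 * Real.exp (-k * |x - μ|)
      = 1 / 2 * Real.exp (k * (μ - μ)) := laplace_cdf_le hk le_rfl
  have hcong : ∀ x ∈ Set.Ico μ t,
      k / 2 * Real.exp (-k * |x - μ|) = k / 2 * Real.exp (k * μ) * Real.exp (-k * x) := by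
    intro x hx
    have hxμ : 0 ≤ x - μ := by simp only [Set.mem_Ico] at hx; linarith
    rw [abs_of_nonneg hxμ, show -k * (x - μ) = k * μ + -k * x by ring, Real.exp_add]
    ring
  rw [h1, setIntegral_congr_fun measurableSet_Ico hcong, integral_const_mul,
    integral_exp_mul_Ico (neg_ne_zero.mpr hk.ne') h]
  simp only [sub_self, mul_zero, Real.exp_zero]
  rw [show -k * t = -(k * t) by ring, show -k * μ = -(k * μ) by ring,
    show -(k * (t - μ)) = k * μ + -(k * t) by ring, Real.exp_add]
  have e1 : Real.exp (k * μ) * Real.exp (-(k * μ)) = 1 := by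
    rw [← Real.exp_add]; simp
  field_simp
  nlinarith [Real.exp_pos (k * μ), Real.exp_pos (-(k * t)), e1]

/-- Laplace survival function, right case. -/
lemma laplace_surv_ge {k : ℝ} (hk : 0 < k) {μ t : ℝ} (h : μ ≤ t) :
    ∫ y in Set.Ici t, k / 2 * Real.exp (-k * |y - μ|)
      = 1 / 2 * Real.exp (-(k * (t - μ))) := by
  have hcong : ∀ y ∈ Set.Ici t,
      k / 2 * Real.exp (-k * |y - μ|) = k / 2 * Real.exp (k * μ) * Real.exp (-(k * y)) := by
    intro y hy
    have hyμ : 0 ≤ y - μ := by simp only [Set.mem_Ici] at hy; linarith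
    rw [abs_of_nonneg hyμ, show -k * (y - μ) = k * μ + -(k * y) by ring, Real.exp_add]
    ring
  rw [setIntegral_congr_fun measurableSet_Ici hcong, integral_const_mul,
    integral_exp_neg_mul_Ici hk,
    show -(k * (t - μ)) = k * μ + -(k * t) by ring, Real.exp_add]
  field_simp

/-- Laplace survival function, left case. -/
lemma laplace_surv_le {k : ℝ} (hk : 0 < k) {μ t : ℝ} (h : t ≤ μ) :
    ∫ y in Set.Ici t, k / 2 * Real.exp (-k * |y - μ|)
      = 1 - 1 / 2 * Real.exp (k * (t - μ)) := by
  have hsplit : Set.Ico t μ ∪ Set.Ici μ = Set.Ici t := Set.Ico_union_Ici_eq_Ici h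
  have hint2 : IntegrableOn (fun y => k / 2 * Real.exp (-k * |y - μ|)) (Set.Ici μ) := by
    have base : IntegrableOn (fun y => k / 2 * Real.exp (k * μ) * Real.exp (-(k * y)))
        (Set.Ici μ) := (integrableOn_exp_neg_mul_Ici hk μ).const_mul (k / 2 * Real.exp (k * μ))
    refine base.congr_fun (fun y hy => ?_) measurableSet_Ici
    have hyμ : 0 ≤ y - μ := by simp only [Set.mem_Ici] at hy; linarith
    rw [abs_of_nonneg hyμ, show -k * (y - μ) = k * μ + -(k * y) by ring, Real.exp_add]
    ring
  have hint1 : IntegrableOn (fun y => k / 2 * Real.exp (-k * |y - μ|)) (Set.Ico t μ) := by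
    apply ((Continuous.integrableOn_Icc (by fun_prop)).mono_set Set.Ico_subset_Icc_self)
  have hdisj : Disjoint (Set.Ico t μ) (Set.Ici μ) := by
    rw [Set.disjoint_left]; intro x hx hx'
    exact absurd (Set.mem_Ici.mp hx') (not_le.mpr hx.2)
  rw [← hsplit, setIntegral_union hdisj measurableSet_Ici hint1 hint2]
  have h1 : ∫ y in Set.Ici μ, k / 2 * Real.exp (-k * |y - μ|)
      = 1 / 2 * Real.exp (-(k * (μ - μ))) := laplace_surv_ge hk le_rfl
  have hcong : ∀ y ∈ Set.Ico t μ,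
      k / 2 * Real.exp (-k * |y - μ|) = k / 2 * Real.exp (-(k * μ)) * Real.exp (k * y) := by
    intro y hy
    have hyμ : y - μ < 0 := by simp only [Set.mem_Ico] at hy; linarith
    rw [abs_of_neg hyμ, show -k * -(y - μ) = -(k * μ) + k * y by ring, Real.exp_add]
    ring
  rw [h1, setIntegral_congr_fun measurableSet_Ico hcong, integral_const_mul,
    integral_exp_mul_Ico hk.ne' h]
  simp only [sub_self, mul_zero, neg_zero, Real.exp_zero]
  rw [show k * (t - μ) = -(k * μ) + k * t by ring, Real.exp_add]
  have e1 : Real.exp (-(k * μ)) * Real.exp (k * μ) = 1 := by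
    rw [← Real.exp_add]; simp
  field_simp
  nlinarith [Real.exp_pos (-(k * μ)), Real.exp_pos (k * t), e1]

end SVTAux

set_option maxHeartbeats 2000000 in
/-- Path probability of the SVT automaton on input (0,1):
P(X₁ < X_T ∧ X₂ ≥ X_T) for X_T ~ Lap(ε/2,0), X₁ ~ Lap(ε/4,0), X₂ ~ Lap(ε/4,1). -/
theorem svt_path_prob_01 (ε : ℝ) (hε : 0 < ε) :
    (∫ t : ℝ, ((ε / 2 / 2) * Real.exp (-(ε / 2) * |t - 0|)) *
        (∫ x in Set.Iio t, (ε / 4 / 2) * Real.exp (-(ε / 4) * |x - 0|)) *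
        (∫ y in Set.Ici t, (ε / 4 / 2) * Real.exp (-(ε / 4) * |y - 1|))) =
      (24 * Real.exp (3 * ε / 4) - 1 + 8 * Real.exp (ε / 4)
        - 21 * Real.exp (ε / 2)) / (48 * Real.exp (3 * ε / 4)) := by
  have h4 : (0 : ℝ) < ε / 4 := by linarith
  have h2 : (0 : ℝ) < ε / 2 := by linarith
  have h34 : (0 : ℝ) < 3 * ε / 4 := by linarith
  obtain ⟨g, hg⟩ : ∃ g : ℝ → ℝ, g = fun t => ((ε / 2 / 2) * Real.exp (-(ε / 2) * |t - 0|)) *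
      (∫ x in Set.Iio t, (ε / 4 / 2) * Real.exp (-(ε / 4) * |x - 0|)) *
      (∫ y in Set.Ici t, (ε / 4 / 2) * Real.exp (-(ε / 4) * |y - 1|)) := ⟨_, rfl⟩
  obtain ⟨gA, hgA⟩ : ∃ gA : ℝ → ℝ, gA = fun t => ε / 8 * Real.exp (3 * ε / 4 * t)
      - ε / 16 * Real.exp (-(ε / 4)) * Real.exp (ε * t) := ⟨_, rfl⟩
  obtain ⟨gB, hgB⟩ : ∃ gB : ℝ → ℝ, gB = fun t =>
      (ε / 4 + ε / 16 * Real.exp (-(ε / 4))) * Real.exp (-(ε / 2) * t)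
      - ε / 8 * Real.exp (-(3 * ε / 4) * t)
      - ε / 8 * Real.exp (-(ε / 4)) * Real.exp (-(ε / 4) * t) := ⟨_, rfl⟩
  obtain ⟨gC, hgC⟩ : ∃ gC : ℝ → ℝ, gC = fun t => ε / 8 * Real.exp (ε / 4) * Real.exp (-(3 * ε / 4 * t))
      - ε / 16 * Real.exp (ε / 4) * Real.exp (-(ε * t)) := ⟨_, rfl⟩
  rw [show (∫ t : ℝ, ((ε / 2 / 2) * Real.exp (-(ε / 2) * |t - 0|)) *
        (∫ x in Set.Iio t, (ε / 4 / 2) * Real.exp (-(ε / 4) * |x - 0|)) *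
        (∫ y in Set.Ici t, (ε / 4 / 2) * Real.exp (-(ε / 4) * |y - 1|))) = ∫ t : ℝ, g t
      from by rw [hg]]
  -- pointwise identities
  have heqA : Set.EqOn g gA (Set.Iio 0) := by
    intro t ht
    have ht' : t < 0 := ht
    simp only [hg, hgA]
    rw [SVTAux.laplace_cdf_le h4 (le_of_lt ht'),
      SVTAux.laplace_surv_le h4 (by linarith : t ≤ (1 : ℝ)),
      sub_zero, abs_of_neg ht']
    have e1 : Real.exp (-(ε / 2) * -t) = Real.exp (ε / 4 * t) ^ 2 := by
      rw [show -(ε / 2) * -t = ε / 4 * t + ε / 4 * t by ring, Real.exp_add]; ring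
    have e3 : Real.exp (ε / 4 * (t - 1)) = Real.exp (ε / 4 * t) * Real.exp (-(ε / 4)) := by
      rw [← Real.exp_add]; congr 1; ring
    have e4 : Real.exp (3 * ε / 4 * t) = Real.exp (ε / 4 * t) ^ 3 := by
      rw [show 3 * ε / 4 * t = ε / 4 * t + (ε / 4 * t + ε / 4 * t) by ring,
        Real.exp_add, Real.exp_add]; ring
    have e5 : Real.exp (ε * t) = Real.exp (ε / 4 * t) ^ 4 := by
      rw [show ε * t = ε / 4 * t + (ε / 4 * t + (ε / 4 * t + ε / 4 * t)) by ring,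
        Real.exp_add, Real.exp_add, Real.exp_add]; ring
    rw [e1, e3, e4, e5]; ring
  have heqB : Set.EqOn g gB (Set.Ico 0 1) := by
    intro t ht
    have ht0 : (0 : ℝ) ≤ t := ht.1
    have ht1 : t < 1 := ht.2
    simp only [hg, hgB]
    rw [SVTAux.laplace_cdf_ge h4 (by linarith : (0 : ℝ) ≤ t),
      SVTAux.laplace_surv_le h4 (le_of_lt ht1),
      sub_zero, abs_of_nonneg ht0]
    have e1 : Real.exp (-(ε / 2) * t) = Real.exp (-(ε / 4) * t) ^ 2 := by
      rw [show -(ε / 2) * t = -(ε / 4) * t + -(ε / 4) * t by ring, Real.exp_add]; ring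
    have e2 : Real.exp (-(ε / 4 * t)) = Real.exp (-(ε / 4) * t) := by congr 1; ring
    have e3 : Real.exp (ε / 4 * (t - 1))
        = Real.exp (-(ε / 4)) * (Real.exp (-(ε / 4) * t))⁻¹ := by
      rw [← Real.exp_neg, ← Real.exp_add]; congr 1; ring
    have e4 : Real.exp (-(3 * ε / 4) * t) = Real.exp (-(ε / 4) * t) ^ 3 := by
      rw [show -(3 * ε / 4) * t = -(ε / 4) * t + (-(ε / 4) * t + -(ε / 4) * t) by ring,
        Real.exp_add, Real.exp_add]; ring
    have hne : Real.exp (-(ε / 4) * t) ≠ 0 := (Real.exp_pos _).ne'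
    rw [e1, e2, e3, e4]
    field_simp
    ring
  have heqC : Set.EqOn g gC (Set.Ici 1) := by
    intro t ht
    have ht1 : (1 : ℝ) ≤ t := ht
    simp only [hg, hgC]
    rw [SVTAux.laplace_cdf_ge h4 (by linarith : (0 : ℝ) ≤ t),
      SVTAux.laplace_surv_ge h4 ht1,
      sub_zero, abs_of_nonneg (by linarith : (0 : ℝ) ≤ t)]
    have e1 : Real.exp (-(ε / 2) * t) = Real.exp (-(ε / 4) * t) ^ 2 := by
      rw [show -(ε / 2) * t = -(ε / 4) * t + -(ε / 4) * t by ring, Real.exp_add]; ring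
    have e2 : Real.exp (-(ε / 4 * t)) = Real.exp (-(ε / 4) * t) := by congr 1; ring
    have e3 : Real.exp (-(ε / 4 * (t - 1)))
        = Real.exp (ε / 4) * Real.exp (-(ε / 4) * t) := by
      rw [← Real.exp_add]; congr 1; ring
    have e4 : Real.exp (-(3 * ε / 4 * t)) = Real.exp (-(ε / 4) * t) ^ 3 := by
      rw [show -(3 * ε / 4 * t) = -(ε / 4) * t + (-(ε / 4) * t + -(ε / 4) * t) by ring,
        Real.exp_add, Real.exp_add]; ring
    have e5 : Real.exp (-(ε * t)) = Real.exp (-(ε / 4) * t) ^ 4 := by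
      rw [show -(ε * t) = -(ε / 4) * t + (-(ε / 4) * t + (-(ε / 4) * t + -(ε / 4) * t)) by ring,
        Real.exp_add, Real.exp_add, Real.exp_add]; ring
    rw [e1, e2, e3, e4, e5]; ring
  -- integrability of the explicit pieces
  have hintA : IntegrableOn gA (Set.Iio 0) := by
    rw [hgA]
    have i1 : IntegrableOn (fun t : ℝ => ε / 8 * Real.exp (3 * ε / 4 * t)) (Set.Iio 0) :=
      (SVTAux.integrableOn_exp_mul_Iio h34 0).const_mul (ε / 8)
    have i2 : IntegrableOn (fun t : ℝ => ε / 16 * Real.exp (-(ε / 4)) * Real.exp (ε * t))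
        (Set.Iio 0) := by
      have : IntegrableOn (fun t : ℝ => ε / 16 * (Real.exp (-(ε / 4)) * Real.exp (ε * t)))
          (Set.Iio 0) := ((SVTAux.integrableOn_exp_mul_Iio hε 0).const_mul
        (Real.exp (-(ε / 4)))).const_mul (ε / 16)
      refine this.congr_fun (fun x _ => ?_) measurableSet_Iio
      ring
    exact i1.sub i2
  have hintB : IntegrableOn gB (Set.Ico 0 1) := by
    rw [hgB]
    exact (Continuous.integrableOn_Icc (by fun_prop)).mono_set Set.Ico_subset_Icc_self
  have hintC : IntegrableOn gC (Set.Ici 1) := by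
    rw [hgC]
    have i1 : IntegrableOn (fun t : ℝ => ε / 8 * Real.exp (ε / 4) * Real.exp (-(3 * ε / 4 * t)))
        (Set.Ici 1) := by
      have i0 : IntegrableOn
          (fun t : ℝ => ε / 8 * (Real.exp (ε / 4) * Real.exp (-(3 * ε / 4 * t)))) (Set.Ici 1) :=
        ((SVTAux.integrableOn_exp_neg_mul_Ici h34 1).const_mul
          (Real.exp (ε / 4))).const_mul (ε / 8)
      refine i0.congr_fun (fun x _ => ?_) measurableSet_Ici
      show ε / 8 * (Real.exp (ε / 4) * Real.exp (-(3 * ε / 4 * x)))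
          = ε / 8 * Real.exp (ε / 4) * Real.exp (-(3 * ε / 4 * x))
      ring
    have i2 : IntegrableOn (fun t : ℝ => ε / 16 * Real.exp (ε / 4) * Real.exp (-(ε * t)))
        (Set.Ici 1) := by
      have i0 : IntegrableOn
          (fun t : ℝ => ε / 16 * (Real.exp (ε / 4) * Real.exp (-(ε * t)))) (Set.Ici 1) :=
        ((SVTAux.integrableOn_exp_neg_mul_Ici hε 1).const_mul
          (Real.exp (ε / 4))).const_mul (ε / 16)
      refine i0.congr_fun (fun x _ => ?_) measurableSet_Ici
      show ε / 16 * (Real.exp (ε / 4) * Real.exp (-(ε * x)))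
          = ε / 16 * Real.exp (ε / 4) * Real.exp (-(ε * x))
      ring
    exact i1.sub i2
  have hgIio : IntegrableOn g (Set.Iio 0) :=
    hintA.congr_fun (fun x hx => (heqA hx).symm) measurableSet_Iio
  have hgIco : IntegrableOn g (Set.Ico 0 1) :=
    hintB.congr_fun (fun x hx => (heqB hx).symm) measurableSet_Ico
  have hgIci1 : IntegrableOn g (Set.Ici 1) :=
    hintC.congr_fun (fun x hx => (heqC hx).symm) measurableSet_Ici
  have hsplit1 : Set.Ico (0 : ℝ) 1 ∪ Set.Ici 1 = Set.Ici 0 :=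
    Set.Ico_union_Ici_eq_Ici zero_le_one
  have hgIci : IntegrableOn g (Set.Ici 0) := by
    rw [← hsplit1]; exact hgIco.union hgIci1
  have hdisj : Disjoint (Set.Ico (0 : ℝ) 1) (Set.Ici 1) := by
    rw [Set.disjoint_left]; intro x hx hx'
    exact absurd (Set.mem_Ici.mp hx') (not_le.mpr hx.2)
  -- split the integral
  have hIA : ∫ t in Set.Iio 0, g t = ∫ t in Set.Iio 0, gA t :=
    setIntegral_congr_fun measurableSet_Iio heqA
  have hIB : ∫ t in Set.Ico 0 1, g t = ∫ t in Set.Ico 0 1, gB t :=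
    setIntegral_congr_fun measurableSet_Ico heqB
  have hIC : ∫ t in Set.Ici 1, g t = ∫ t in Set.Ici 1, gC t :=
    setIntegral_congr_fun measurableSet_Ici heqC
  have key : (∫ t : ℝ, g t)
      = (∫ t in Set.Iio 0, gA t) + ((∫ t in Set.Ico 0 1, gB t) + (∫ t in Set.Ici 1, gC t)) := by
    rw [← intervalIntegral.integral_Iio_add_Ici hgIio hgIci, hIA]
    congr 1
    rw [← hsplit1, setIntegral_union hdisj measurableSet_Ici hgIco hgIci1, hIB, hIC]
  -- evaluate the three integrals
  have vA : ∫ t in Set.Iio 0, gA t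
      = ε / 8 * (Real.exp (3 * ε / 4 * 0) / (3 * ε / 4))
        - ε / 16 * Real.exp (-(ε / 4)) * (Real.exp (ε * 0) / ε) := by
    rw [hgA]
    have i1 : IntegrableOn (fun t : ℝ => ε / 8 * Real.exp (3 * ε / 4 * t)) (Set.Iio 0) :=
      (SVTAux.integrableOn_exp_mul_Iio h34 0).const_mul (ε / 8)
    have i2 : IntegrableOn (fun t : ℝ => ε / 16 * Real.exp (-(ε / 4)) * Real.exp (ε * t))
        (Set.Iio 0) := by
      have i0 : IntegrableOn (fun t : ℝ => ε / 16 * (Real.exp (-(ε / 4)) * Real.exp (ε * t)))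
          (Set.Iio 0) :=
        ((SVTAux.integrableOn_exp_mul_Iio hε 0).const_mul (Real.exp (-(ε / 4)))).const_mul
          (ε / 16)
      refine i0.congr_fun (fun x _ => ?_) measurableSet_Iio
      ring
    rw [integral_sub i1 i2]
    have j1 : ∫ t in Set.Iio 0, ε / 8 * Real.exp (3 * ε / 4 * t)
        = ε / 8 * (Real.exp (3 * ε / 4 * 0) / (3 * ε / 4)) := by
      rw [integral_const_mul, SVTAux.integral_exp_mul_Iio h34]
    have j2 : ∫ t in Set.Iio 0, ε / 16 * Real.exp (-(ε / 4)) * Real.exp (ε * t)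
        = ε / 16 * Real.exp (-(ε / 4)) * (Real.exp (ε * 0) / ε) := by
      rw [integral_const_mul, SVTAux.integral_exp_mul_Iio hε]
    rw [j1, j2]
  have vB : ∫ t in Set.Ico 0 1, gB t
      = (ε / 4 + ε / 16 * Real.exp (-(ε / 4)))
          * ((Real.exp (-(ε / 2) * 1) - Real.exp (-(ε / 2) * 0)) / (-(ε / 2)))
        - ε / 8 * ((Real.exp (-(3 * ε / 4) * 1) - Real.exp (-(3 * ε / 4) * 0)) / (-(3 * ε / 4)))
        - ε / 8 * Real.exp (-(ε / 4))
          * ((Real.exp (-(ε / 4) * 1) - Real.exp (-(ε / 4) * 0)) / (-(ε / 4))) := by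
    rw [hgB]
    have i1 : IntegrableOn (fun t : ℝ =>
        (ε / 4 + ε / 16 * Real.exp (-(ε / 4))) * Real.exp (-(ε / 2) * t)) (Set.Ico 0 1) :=
      (Continuous.integrableOn_Icc (by fun_prop)).mono_set Set.Ico_subset_Icc_self
    have i2 : IntegrableOn (fun t : ℝ => ε / 8 * Real.exp (-(3 * ε / 4) * t)) (Set.Ico 0 1) :=
      (Continuous.integrableOn_Icc (by fun_prop)).mono_set Set.Ico_subset_Icc_self
    have i3 : IntegrableOn (fun t : ℝ =>
        ε / 8 * Real.exp (-(ε / 4)) * Real.exp (-(ε / 4) * t)) (Set.Ico 0 1) :=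
      (Continuous.integrableOn_Icc (by fun_prop)).mono_set Set.Ico_subset_Icc_self
    have i12 : IntegrableOn (fun t : ℝ =>
        (ε / 4 + ε / 16 * Real.exp (-(ε / 4))) * Real.exp (-(ε / 2) * t)
          - ε / 8 * Real.exp (-(3 * ε / 4) * t)) (Set.Ico 0 1) :=
      (Continuous.integrableOn_Icc (by fun_prop)).mono_set Set.Ico_subset_Icc_self
    rw [integral_sub i12 i3, integral_sub i1 i2]
    have j1 : ∫ t in Set.Ico (0 : ℝ) 1,
        (ε / 4 + ε / 16 * Real.exp (-(ε / 4))) * Real.exp (-(ε / 2) * t)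
        = (ε / 4 + ε / 16 * Real.exp (-(ε / 4)))
            * ((Real.exp (-(ε / 2) * 1) - Real.exp (-(ε / 2) * 0)) / (-(ε / 2))) := by
      rw [integral_const_mul,
        SVTAux.integral_exp_mul_Ico (show -(ε / 2) ≠ 0 by linarith) zero_le_one]
    have j2 : ∫ t in Set.Ico (0 : ℝ) 1, ε / 8 * Real.exp (-(3 * ε / 4) * t)
        = ε / 8 * ((Real.exp (-(3 * ε / 4) * 1) - Real.exp (-(3 * ε / 4) * 0))
            / (-(3 * ε / 4))) := by
      rw [integral_const_mul,
        SVTAux.integral_exp_mul_Ico (show -(3 * ε / 4) ≠ 0 by linarith) zero_le_one]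
    have j3 : ∫ t in Set.Ico (0 : ℝ) 1, ε / 8 * Real.exp (-(ε / 4)) * Real.exp (-(ε / 4) * t)
        = ε / 8 * Real.exp (-(ε / 4))
            * ((Real.exp (-(ε / 4) * 1) - Real.exp (-(ε / 4) * 0)) / (-(ε / 4))) := by
      rw [integral_const_mul,
        SVTAux.integral_exp_mul_Ico (show -(ε / 4) ≠ 0 by linarith) zero_le_one]
    rw [j1, j2, j3]
  have vC : ∫ t in Set.Ici 1, gC t
      = ε / 8 * Real.exp (ε / 4) * (Real.exp (-(3 * ε / 4 * 1)) / (3 * ε / 4))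
        - ε / 16 * Real.exp (ε / 4) * (Real.exp (-(ε * 1)) / ε) := by
    rw [hgC]
    have i1 : IntegrableOn (fun t : ℝ => ε / 8 * Real.exp (ε / 4) * Real.exp (-(3 * ε / 4 * t)))
        (Set.Ici 1) := by
      have i0 : IntegrableOn
          (fun t : ℝ => ε / 8 * (Real.exp (ε / 4) * Real.exp (-(3 * ε / 4 * t)))) (Set.Ici 1) :=
        ((SVTAux.integrableOn_exp_neg_mul_Ici h34 1).const_mul
          (Real.exp (ε / 4))).const_mul (ε / 8)
      refine i0.congr_fun (fun x _ => ?_) measurableSet_Ici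
      ring
    have i2 : IntegrableOn (fun t : ℝ => ε / 16 * Real.exp (ε / 4) * Real.exp (-(ε * t)))
        (Set.Ici 1) := by
      have i0 : IntegrableOn
          (fun t : ℝ => ε / 16 * (Real.exp (ε / 4) * Real.exp (-(ε * t)))) (Set.Ici 1) :=
        ((SVTAux.integrableOn_exp_neg_mul_Ici hε 1).const_mul
          (Real.exp (ε / 4))).const_mul (ε / 16)
      refine i0.congr_fun (fun x _ => ?_) measurableSet_Ici
      ring
    rw [integral_sub i1 i2]
    have j1 : ∫ t in Set.Ici (1 : ℝ), ε / 8 * Real.exp (ε / 4) * Real.exp (-(3 * ε / 4 * t))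
        = ε / 8 * Real.exp (ε / 4) * (Real.exp (-(3 * ε / 4 * 1)) / (3 * ε / 4)) := by
      rw [integral_const_mul, SVTAux.integral_exp_neg_mul_Ici h34]
    have j2 : ∫ t in Set.Ici (1 : ℝ), ε / 16 * Real.exp (ε / 4) * Real.exp (-(ε * t))
        = ε / 16 * Real.exp (ε / 4) * (Real.exp (-(ε * 1)) / ε) := by
      rw [integral_const_mul, SVTAux.integral_exp_neg_mul_Ici hε]
    rw [j1, j2]
  rw [key, vA, vB, vC]
  -- final arithmetic
  have hEpos : (0 : ℝ) < Real.exp (ε / 4) := Real.exp_pos _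
  have p0 : ∀ c : ℝ, Real.exp (c * 0) = 1 := fun c => by rw [mul_zero, Real.exp_zero]
  have p4 : Real.exp (-(ε / 4)) = (Real.exp (ε / 4))⁻¹ := Real.exp_neg _
  have p3 : Real.exp (-(ε / 4) * 1) = (Real.exp (ε / 4))⁻¹ := by
    rw [mul_one]; exact Real.exp_neg _
  have p1 : Real.exp (-(ε / 2) * 1) = (Real.exp (ε / 4))⁻¹ ^ 2 := by
    rw [show -(ε / 2) * 1 = -(ε / 4) + -(ε / 4) by ring, Real.exp_add, Real.exp_neg]; ring
  have p2 : Real.exp (-(3 * ε / 4) * 1) = (Real.exp (ε / 4))⁻¹ ^ 3 := by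
    rw [show -(3 * ε / 4) * 1 = -(ε / 4) + (-(ε / 4) + -(ε / 4)) by ring,
      Real.exp_add, Real.exp_add, Real.exp_neg]; ring
  have p5 : Real.exp (-(3 * ε / 4 * 1)) = (Real.exp (ε / 4))⁻¹ ^ 3 := by
    rw [show -(3 * ε / 4 * 1) = -(ε / 4) + (-(ε / 4) + -(ε / 4)) by ring,
      Real.exp_add, Real.exp_add, Real.exp_neg]; ring
  have p6 : Real.exp (-(ε * 1)) = (Real.exp (ε / 4))⁻¹ ^ 4 := by
    rw [show -(ε * 1) = -(ε / 4) + (-(ε / 4) + (-(ε / 4) + -(ε / 4))) by ring,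
      Real.exp_add, Real.exp_add, Real.exp_add, Real.exp_neg]; ring
  have p7 : Real.exp (3 * ε / 4) = Real.exp (ε / 4) ^ 3 := by
    rw [show 3 * ε / 4 = ε / 4 + (ε / 4 + ε / 4) by ring, Real.exp_add, Real.exp_add]; ring
  have p8 : Real.exp (ε / 2) = Real.exp (ε / 4) ^ 2 := by
    rw [show ε / 2 = ε / 4 + ε / 4 by ring, Real.exp_add]; ring
  rw [p0, p0, p0, p0, p1, p2, p3, p4, p5, p6, p7, p8]
  have hne : Real.exp (ε / 4) ≠ 0 := hEpos.ne'
  field_simp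
  ring_nf
  rw [Real.exp_zero]
  ring
end

section
/- Let X_T ~ Lap(ε/2, 0), X₁' ~ Lap(ε/4, 1), and X₂ ~ Lap(ε/4, 1) be independent random variables (ε > 0). Then P(X₁' < X_T ∧ X₂ ≥ X_T) = (-22 + 32·e^{ε/4} - 3ε) / (48·e^{ε/2}). -/
open Real Set MeasureTheory

lemma myintOn_Ioi {b : ℝ} (hb : 0 < b) (c : ℝ) :
    IntegrableOn (fun x : ℝ => Real.exp (-(b * x))) (Ioi c) := by
  simpa [neg_mul] using exp_neg_integrableOn_Ioi c hb

lemma myintOn_Ici {b : ℝ} (hb : 0 < b) (c : ℝ) :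
    IntegrableOn (fun x : ℝ => Real.exp (-(b * x))) (Ici c) :=
  (integrableOn_Ici_iff_integrableOn_Ioi (by finiteness)).2 (myintOn_Ioi hb c)

lemma myint_Ioi {b : ℝ} (hb : 0 < b) (c : ℝ) :
    ∫ x in Ioi c, Real.exp (-(b * x)) = Real.exp (-(b * c)) / b := by
  have h := integral_comp_mul_left_Ioi (fun x => Real.exp (-x)) c hb
  simp only [smul_eq_mul] at h
  rw [h, integral_exp_neg_Ioi]
  ring

lemma myint_Ici {b : ℝ} (hb : 0 < b) (c : ℝ) :
    ∫ x in Ici c, Real.exp (-(b * x)) = Real.exp (-(b * c)) / b := by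
  rw [integral_Ici_eq_integral_Ioi]; exact myint_Ioi hb c

lemma myintOn_Iic {b : ℝ} (hb : 0 < b) (c : ℝ) :
    IntegrableOn (fun x : ℝ => Real.exp (b * x)) (Iic c) := by
  rw [← (Measure.measurePreserving_neg (volume : Measure ℝ)).integrableOn_comp_preimage
    (Homeomorph.neg ℝ).measurableEmbedding]
  have h1 : (fun x : ℝ => -x) ⁻¹' (Iic c) = Ici (-c) := by ext x; simp [neg_le]
  have h2 : ((fun x : ℝ => Real.exp (b * x)) ∘ fun x : ℝ => -x)
      = fun x : ℝ => Real.exp (-(b * x)) := by ext x; simp only [Function.comp_apply]; ring_nf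
  rw [h1, h2]
  exact myintOn_Ici hb _

lemma myintOn_Iio {b : ℝ} (hb : 0 < b) (c : ℝ) :
    IntegrableOn (fun x : ℝ => Real.exp (b * x)) (Iio c) :=
  (myintOn_Iic hb c).mono_set Iio_subset_Iic_self

lemma myint_Iic {b : ℝ} (hb : 0 < b) (c : ℝ) :
    ∫ x in Iic c, Real.exp (b * x) = Real.exp (b * c) / b := by
  have h := integral_comp_neg_Ioi (-c) (fun x : ℝ => Real.exp (b * x))
  simp only [neg_neg] at h
  rw [← h]
  have h2 : ∀ x : ℝ, Real.exp (b * -x) = Real.exp (-(b * x)) := fun x => by ring_nf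
  simp only [h2]
  rw [myint_Ioi hb]
  ring_nf

lemma myint_Iio {b : ℝ} (hb : 0 < b) (c : ℝ) :
    ∫ x in Iio c, Real.exp (b * x) = Real.exp (b * c) / b := by
  rw [← integral_Iic_eq_integral_Iio]; exact myint_Iic hb c

lemma myint_Ioc {b : ℝ} (hb : 0 < b) :
    ∫ x in Ioc (0:ℝ) 1, Real.exp (-(b * x)) = (1 - Real.exp (-b)) / b := by
  have h := setIntegral_union (μ := volume) (f := fun x : ℝ => Real.exp (-(b * x)))
    (Ioc_disjoint_Ioi le_rfl) measurableSet_Ioi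
    ((myintOn_Ioi hb 0).mono_set Ioc_subset_Ioi_self) (myintOn_Ioi hb 1)
  rw [Ioc_union_Ioi_eq_Ioi zero_le_one] at h
  rw [myint_Ioi hb 0, myint_Ioi hb 1] at h
  have := exp_pos b
  field_simp at h ⊢
  simp only [mul_zero, neg_zero, Real.exp_zero] at h; linarith [h]

lemma inner_Iio_le {a : ℝ} (ha : 0 < a) {t : ℝ} (ht : t ≤ 1) :
    ∫ x in Iio t, (a / 2) * Real.exp (-a * |x - 1|) = Real.exp (a * (t - 1)) / 2 := by
  rw [setIntegral_congr_fun (g := fun x : ℝ => ((a/2) * Real.exp (-a)) * Real.exp (a * x))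
    measurableSet_Iio (fun x hx => ?_)]
  · rw [integral_const_mul, myint_Iio ha]
    have h3 : Real.exp (a * (t - 1)) = Real.exp (-a) * Real.exp (a * t) := by
      rw [← Real.exp_add]; ring_nf
    rw [h3]; field_simp
  · have hx1 : x - 1 ≤ 0 := by simp only [mem_Iio] at hx; linarith
    dsimp only
    rw [abs_of_nonpos hx1, mul_assoc, ← Real.exp_add]
    congr 2
    ring

lemma inner_Ici_ge {a : ℝ} (ha : 0 < a) {t : ℝ} (ht : 1 ≤ t) :
    ∫ y in Ici t, (a / 2) * Real.exp (-a * |y - 1|) = Real.exp (-(a * (t - 1))) / 2 := by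
  rw [setIntegral_congr_fun (g := fun y : ℝ => ((a/2) * Real.exp a) * Real.exp (-(a * y)))
    measurableSet_Ici (fun y hy => ?_)]
  · rw [integral_const_mul, myint_Ici ha]
    have h3 : Real.exp (-(a * (t - 1))) = Real.exp a * Real.exp (-(a * t)) := by
      rw [← Real.exp_add]; ring_nf
    rw [h3]; field_simp
  · have hy1 : 0 ≤ y - 1 := by simp only [mem_Ici] at hy; linarith
    dsimp only
    rw [abs_of_nonneg hy1, mul_assoc, ← Real.exp_add]
    congr 2
    ring

lemma dens_intOn {a : ℝ} (ha : 0 < a) :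
    Integrable (fun x : ℝ => (a / 2) * Real.exp (-a * |x - 1|)) := by
  rw [← integrableOn_univ, ← Iic_union_Ioi (a := (1:ℝ))]
  apply IntegrableOn.union
  · refine IntegrableOn.congr_fun ((myintOn_Iic ha 1).const_mul ((a/2) * Real.exp (-a)))
      (fun x hx => ?_) measurableSet_Iic
    have hx1 : x - 1 ≤ 0 := by simp only [mem_Iic] at hx; linarith
    rw [abs_of_nonpos hx1, mul_assoc, ← Real.exp_add]
    congr 2
    ring
  · refine IntegrableOn.congr_fun ((myintOn_Ioi ha 1).const_mul ((a/2) * Real.exp a))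
      (fun x hx => ?_) measurableSet_Ioi
    have hx1 : 0 ≤ x - 1 := by simp only [mem_Ioi] at hx; linarith
    rw [abs_of_nonneg hx1, mul_assoc, ← Real.exp_add]
    congr 2
    ring

lemma dens_total {a : ℝ} (ha : 0 < a) :
    ∫ x : ℝ, (a / 2) * Real.exp (-a * |x - 1|) = 1 := by
  rw [← intervalIntegral.integral_Iic_add_Ioi (b := 1) (dens_intOn ha).integrableOn (dens_intOn ha).integrableOn]
  have h1 : ∫ x in Iic (1:ℝ), (a / 2) * Real.exp (-a * |x - 1|) = 1/2 := by
    rw [setIntegral_congr_fun (g := fun x : ℝ => ((a/2) * Real.exp (-a)) * Real.exp (a * x))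
      measurableSet_Iic (fun x hx => ?_)]
    · rw [integral_const_mul, myint_Iic ha]
      have hx : Real.exp (-a) * Real.exp a = 1 := by rw [← Real.exp_add]; norm_num
      field_simp
      linear_combination hx
    · have hx1 : x - 1 ≤ 0 := by simp only [mem_Iic] at hx; linarith
      dsimp only
      rw [abs_of_nonpos hx1, mul_assoc, ← Real.exp_add]; congr 2; ring
  have h2 : ∫ x in Ioi (1:ℝ), (a / 2) * Real.exp (-a * |x - 1|) = 1/2 := by
    rw [setIntegral_congr_fun (g := fun x : ℝ => ((a/2) * Real.exp a) * Real.exp (-(a * x)))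
      measurableSet_Ioi (fun x hx => ?_)]
    · rw [integral_const_mul, myint_Ioi ha]
      have hx : Real.exp a * Real.exp (-a) = 1 := by rw [← Real.exp_add]; norm_num
      field_simp
      linear_combination hx
    · have hx1 : 0 ≤ x - 1 := by simp only [mem_Ioi] at hx; linarith
      dsimp only
      rw [abs_of_nonneg hx1, mul_assoc, ← Real.exp_add]; congr 2; ring
  rw [h1, h2]; norm_num

lemma inner_Ici_le {a : ℝ} (ha : 0 < a) {t : ℝ} (ht : t ≤ 1) :
    ∫ y in Ici t, (a / 2) * Real.exp (-a * |y - 1|) = 1 - Real.exp (a * (t - 1)) / 2 := by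
  have h := intervalIntegral.integral_Iio_add_Ici (b := t) (dens_intOn ha).integrableOn (dens_intOn ha).integrableOn
  rw [inner_Iio_le ha ht, dens_total ha] at h
  linarith

lemma inner_Iio_ge {a : ℝ} (ha : 0 < a) {t : ℝ} (ht : 1 ≤ t) :
    ∫ x in Iio t, (a / 2) * Real.exp (-a * |x - 1|) = 1 - Real.exp (-(a * (t - 1))) / 2 := by
  have h := intervalIntegral.integral_Iio_add_Ici (b := t) (dens_intOn ha).integrableOn (dens_intOn ha).integrableOn
  rw [inner_Ici_ge ha ht, dens_total ha] at h
  linarith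

lemma main_gen {a : ℝ} (ha : 0 < a) :
    (∫ t : ℝ, (a * Real.exp (-(2 * a) * |t - 0|)) *
        (∫ x in Iio t, (a / 2) * Real.exp (-a * |x - 1|)) *
        (∫ y in Ici t, (a / 2) * Real.exp (-a * |y - 1|))) =
      2 / 3 * Real.exp (-a) - 11 / 24 * Real.exp (-(2 * a)) - a / 4 * Real.exp (-(2 * a)) := by
  set F : ℝ → ℝ := fun t => (a * Real.exp (-(2 * a) * |t - 0|)) *
      (∫ x in Iio t, (a / 2) * Real.exp (-a * |x - 1|)) *
      (∫ y in Ici t, (a / 2) * Real.exp (-a * |y - 1|)) with hF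
  set P1 : ℝ → ℝ := fun t => (a / 2) * Real.exp (-a) * Real.exp (3 * a * t)
      - (a / 4) * Real.exp (-(2 * a)) * Real.exp (4 * a * t) with hP1
  set P2 : ℝ → ℝ := fun t => (a / 2) * Real.exp (-a) * Real.exp (-(a * t))
      - (a / 4) * Real.exp (-(2 * a)) with hP2
  set P3 : ℝ → ℝ := fun t => (a / 2) * Real.exp a * Real.exp (-(3 * a * t))
      - (a / 4) * Real.exp (2 * a) * Real.exp (-(4 * a * t)) with hP3
  have hEq1 : EqOn F P1 (Iic 0) := by
    intro t ht
    simp only [mem_Iic] at ht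
    simp only [hF, hP1, sub_zero]
    rw [abs_of_nonpos ht, inner_Iio_le ha (by linarith), inner_Ici_le ha (by linarith)]
    have h1 : Real.exp (-(2 * a) * -t) * Real.exp (a * (t - 1))
        = Real.exp (-a) * Real.exp (3 * a * t) := by
      rw [← Real.exp_add, ← Real.exp_add]; ring_nf
    have h2 : Real.exp (-(2 * a) * -t) * (Real.exp (a * (t - 1)) * Real.exp (a * (t - 1)))
        = Real.exp (-(2 * a)) * Real.exp (4 * a * t) := by
      rw [← Real.exp_add, ← Real.exp_add, ← Real.exp_add]; ring_nf
    linear_combination (a / 2) * h1 - (a / 4) * h2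
  have hEq2 : EqOn F P2 (Ioc 0 1) := by
    intro t ht
    simp only [mem_Ioc] at ht
    simp only [hF, hP2, sub_zero]
    rw [abs_of_nonneg ht.1.le, inner_Iio_le ha ht.2, inner_Ici_le ha ht.2]
    have h1 : Real.exp (-(2 * a) * t) * Real.exp (a * (t - 1))
        = Real.exp (-a) * Real.exp (-(a * t)) := by
      rw [← Real.exp_add, ← Real.exp_add]; ring_nf
    have h2 : Real.exp (-(2 * a) * t) * (Real.exp (a * (t - 1)) * Real.exp (a * (t - 1)))
        = Real.exp (-(2 * a)) := by
      rw [← Real.exp_add, ← Real.exp_add]; ring_nf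
    linear_combination (a / 2) * h1 - (a / 4) * h2
  have hEq3 : EqOn F P3 (Ioi 1) := by
    intro t ht
    simp only [mem_Ioi] at ht
    simp only [hF, hP3, sub_zero]
    rw [abs_of_nonneg (by linarith), inner_Iio_ge ha ht.le, inner_Ici_ge ha ht.le]
    have h1 : Real.exp (-(2 * a) * t) * Real.exp (-(a * (t - 1)))
        = Real.exp a * Real.exp (-(3 * a * t)) := by
      rw [← Real.exp_add, ← Real.exp_add]; ring_nf
    have h2 : Real.exp (-(2 * a) * t) * (Real.exp (-(a * (t - 1))) * Real.exp (-(a * (t - 1))))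
        = Real.exp (2 * a) * Real.exp (-(4 * a * t)) := by
      rw [← Real.exp_add, ← Real.exp_add, ← Real.exp_add]; ring_nf
    linear_combination (a / 2) * h1 - (a / 4) * h2
  have h3a : 0 < 3 * a := by linarith
  have h4a : 0 < 4 * a := by linarith
  have hi1 : IntegrableOn P1 (Iic 0) :=
    (((myintOn_Iic h3a 0).const_mul ((a / 2) * Real.exp (-a))).sub
      ((myintOn_Iic h4a 0).const_mul ((a / 4) * Real.exp (-(2 * a)))))
  have hi2 : IntegrableOn P2 (Ioc 0 1) :=
    ((((myintOn_Ioi ha 0).mono_set Ioc_subset_Ioi_self).const_mul ((a / 2) * Real.exp (-a))).sub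
      (integrableOn_const (by rw [Real.volume_Ioc]; norm_num)))
  have hi3 : IntegrableOn P3 (Ioi 1) :=
    (((myintOn_Ioi h3a 1).const_mul ((a / 2) * Real.exp a)).sub
      ((myintOn_Ioi h4a 1).const_mul ((a / 4) * Real.exp (2 * a))))
  have hF1 : IntegrableOn F (Iic 0) := hi1.congr_fun hEq1.symm measurableSet_Iic
  have hF2 : IntegrableOn F (Ioc 0 1) := hi2.congr_fun hEq2.symm measurableSet_Ioc
  have hF3 : IntegrableOn F (Ioi 1) := hi3.congr_fun hEq3.symm measurableSet_Ioi
  have hU : Ioc (0:ℝ) 1 ∪ Ioi 1 = Ioi 0 := Ioc_union_Ioi_eq_Ioi zero_le_one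
  have hFIoi : IntegrableOn F (Ioi 0) := by rw [← hU]; exact hF2.union hF3
  have hsplit1 : (∫ t : ℝ, F t) = (∫ t in Iic 0, F t) + ∫ t in Ioi 0, F t :=
    (intervalIntegral.integral_Iic_add_Ioi hF1 hFIoi).symm
  have hsplit2 : (∫ t in Ioi 0, F t) = (∫ t in Ioc 0 1, F t) + ∫ t in Ioi 1, F t := by
    rw [← setIntegral_union (Ioc_disjoint_Ioi le_rfl) measurableSet_Ioi hF2 hF3, hU]
  have hI1 : (∫ t in Iic 0, F t)
      = (a / 2) * Real.exp (-a) * (Real.exp (3 * a * 0) / (3 * a))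
        - (a / 4) * Real.exp (-(2 * a)) * (Real.exp (4 * a * 0) / (4 * a)) := by
    rw [setIntegral_congr_fun measurableSet_Iic hEq1, hP1]
    rw [integral_sub ((myintOn_Iic h3a 0).const_mul _) ((myintOn_Iic h4a 0).const_mul _),
      integral_const_mul, integral_const_mul, myint_Iic h3a, myint_Iic h4a]
  have hI2 : (∫ t in Ioc 0 1, F t)
      = (a / 2) * Real.exp (-a) * ((1 - Real.exp (-a)) / a) - (a / 4) * Real.exp (-(2 * a)) := by
    rw [setIntegral_congr_fun measurableSet_Ioc hEq2, hP2]
    rw [integral_sub (((myintOn_Ioi ha 0).mono_set Ioc_subset_Ioi_self).const_mul _)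
      (integrableOn_const (by rw [Real.volume_Ioc]; norm_num)),
      integral_const_mul, myint_Ioc ha, setIntegral_const]
    rw [Real.volume_real_Ioc]
    norm_num
  have hI3 : (∫ t in Ioi 1, F t)
      = (a / 2) * Real.exp a * (Real.exp (-(3 * a * 1)) / (3 * a))
        - (a / 4) * Real.exp (2 * a) * (Real.exp (-(4 * a * 1)) / (4 * a)) := by
    rw [setIntegral_congr_fun measurableSet_Ioi hEq3, hP3]
    rw [integral_sub ((myintOn_Ioi h3a 1).const_mul _) ((myintOn_Ioi h4a 1).const_mul _),
      integral_const_mul, integral_const_mul, myint_Ioi h3a, myint_Ioi h4a]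
  have k1 : Real.exp a * Real.exp (-(3 * a * 1)) = Real.exp (-(2 * a)) := by
    rw [← Real.exp_add]; ring_nf
  have k2 : Real.exp (2 * a) * Real.exp (-(4 * a * 1)) = Real.exp (-(2 * a)) := by
    rw [← Real.exp_add]; ring_nf
  have k3 : Real.exp (-a) * Real.exp (-a) = Real.exp (-(2 * a)) := by
    rw [← Real.exp_add]; ring_nf
  have k4 : Real.exp (3 * a * 0) = 1 := by norm_num
  have k5 : Real.exp (4 * a * 0) = 1 := by norm_num
  have hI1' : (∫ t in Iic 0, F t)
      = Real.exp (-a) / 6 - Real.exp (-(2 * a)) / 16 := by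
    rw [hI1, k4, k5]; field_simp; ring
  have hI2' : (∫ t in Ioc 0 1, F t)
      = (Real.exp (-a) - Real.exp (-(2 * a))) / 2 - a / 4 * Real.exp (-(2 * a)) := by
    rw [hI2]; field_simp; linear_combination (norm := ring_nf) (-4) * k3
  have hI3' : (∫ t in Ioi 1, F t)
      = Real.exp (-(2 * a)) / 6 - Real.exp (-(2 * a)) / 16 := by
    rw [hI3]; field_simp; linear_combination (norm := ring_nf) 1536 * k1 - 576 * k2
  rw [hsplit1, hsplit2, hI1', hI2', hI3']
  ring

/-- Path probability of the SVT automaton on input (1,1):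
P(X₁' < X_T ∧ X₂ ≥ X_T) for X_T ~ Lap(ε/2,0), X₁' ~ Lap(ε/4,1), X₂ ~ Lap(ε/4,1). -/
theorem svt_path_prob_11 (ε : ℝ) (hε : 0 < ε) :
    (∫ t : ℝ, ((ε / 2 / 2) * Real.exp (-(ε / 2) * |t - 0|)) *
        (∫ x in Set.Iio t, (ε / 4 / 2) * Real.exp (-(ε / 4) * |x - 1|)) *
        (∫ y in Set.Ici t, (ε / 4 / 2) * Real.exp (-(ε / 4) * |y - 1|))) =
      (-22 + 32 * Real.exp (ε / 4) - 3 * ε) / (48 * Real.exp (ε / 2)) := by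
  obtain ⟨a, rfl⟩ : ∃ a, ε = 4 * a := ⟨ε / 4, by ring⟩
  have ha : 0 < a := by linarith
  have e1 : (4 * a / 2 / 2) = a := by ring
  have e2 : (4 * a / 4 / 2) = a / 2 := by ring
  have e3 : (-(4 * a / 2)) = -(2 * a) := by ring
  have e4 : (-(4 * a / 4)) = -a := by ring
  have e5 : (4 * a / 4) = a := by ring
  have e6 : (4 * a / 2) = 2 * a := by ring
  rw [show (3 : ℝ) * (4 * a) = 12 * a by ring]
  have e7 : (2 * a / 2) = a := by ring
  simp only [e1, e2, e3, e4, e5, e6, e7]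
  rw [main_gen ha]
  have h2 : Real.exp (2 * a) = Real.exp a * Real.exp a := by
    rw [← Real.exp_add]; ring_nf
  rw [Real.exp_neg, Real.exp_neg, h2]
  have h3 := Real.exp_ne_zero a
  field_simp
  ring
end

section
/- Let X₁ ~ Lap(k, μ₁) and X₂ ~ Lap(k, μ₂) be independent with k > 0 and μ₂ = μ₁ + 1. Then P(X₂ < X₁) = P(X₁ ≤ X₂ with roles swapped) = (1/2)·e^{-k}·(1 + k/2), and in particular P(X₂ < X₁) ≤ (1/2)·e^{-k}·(1 + k/2). -/
open MeasureTheory Set Real Filter Topology intervalIntegral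

lemma aux_int_Ioi {c : ℝ} (hc : 0 < c) (a : ℝ) :
    ∫ x in Ioi a, Real.exp (-(c*x)) = Real.exp (-(c*a)) / c := by
  have hd : ∀ x ∈ Ici a, HasDerivAt (fun x => -Real.exp (-(c*x)) / c) (Real.exp (-(c*x))) x := by
    intro x _
    have h1 : HasDerivAt (fun x : ℝ => -(c*x)) (-c) x := by
      simpa using (hasDerivAt_id x).const_mul (-c)
    have h2 := (h1.exp).neg.div_const c
    exact h2.congr_deriv (by field_simp)
  have hint : IntegrableOn (fun x => Real.exp (-(c*x))) (Ioi a) := by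
    simpa [neg_mul] using exp_neg_integrableOn_Ioi a hc
  have htend : Tendsto (fun x => -Real.exp (-(c*x)) / c) atTop (𝓝 0) := by
    have h0 : Tendsto (fun x : ℝ => c * x) atTop atTop := tendsto_id.const_mul_atTop hc
    have h : Tendsto (fun x : ℝ => Real.exp (-(c*x))) atTop (𝓝 0) := by
      simpa [Function.comp_def] using
        Real.tendsto_exp_atBot.comp (tendsto_neg_atTop_atBot.comp h0)
    simpa using (h.neg.div_const c)
  have := integral_Ioi_of_hasDerivAt_of_tendsto' hd hint htend
  rw [this]; ring

lemma aux_int_Iic {c : ℝ} (hc : 0 < c) (a : ℝ) :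
    ∫ x in Iic a, Real.exp (c*x) = Real.exp (c*a) / c := by
  have h := integral_comp_neg_Iic a (fun y => Real.exp (-(c*y)))
  simp only [mul_neg, neg_neg] at h
  rw [h, aux_int_Ioi hc]
  simp [mul_neg, neg_neg]

lemma aux_integrableOn_exp_Iic {c : ℝ} (hc : 0 < c) (a : ℝ) :
    IntegrableOn (fun x : ℝ => Real.exp (c*x)) (Iic a) := by
  have h : IntegrableOn (fun x : ℝ => Real.exp (-c*x)) (Ioi (-a)) := exp_neg_integrableOn_Ioi _ hc
  have A : MeasurableEmbedding fun x : ℝ => -x :=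
    (Homeomorph.neg ℝ).isClosedEmbedding.measurableEmbedding
  have hpre : Ioi (-a) = (fun x : ℝ => -x) ⁻¹' (Iio a) := by
    ext x; simp [neg_lt]
  have hmap : (volume : Measure ℝ).restrict (Iio a)
      = Measure.map (fun x : ℝ => -x) ((volume : Measure ℝ).restrict (Ioi (-a))) := by
    rw [hpre, ← A.restrict_map, Measure.map_neg_eq_self]
  rw [integrableOn_Iic_iff_integrableOn_Iio, IntegrableOn, hmap, A.integrable_map_iff]
  simpa [Function.comp_def, mul_neg, neg_mul, IntegrableOn] using h


open MeasureTheory Set Real Filter Topology intervalIntegral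

lemma aux_intervalIntegral_exp {c : ℝ} (hc : c ≠ 0) (a b : ℝ) :
    ∫ x in a..b, Real.exp (c*x) = (Real.exp (c*b) - Real.exp (c*a)) / c := by
  rw [intervalIntegral.integral_comp_mul_left (fun x => Real.exp x) hc,
    integral_exp]
  rw [smul_eq_mul]; ring


lemma aux_lap_integrableOn_Ici {k μ : ℝ} (hk : 0 < k) {x : ℝ} (hx : μ ≤ x) :
    IntegrableOn (fun y => (k/2) * Real.exp (-k * |y - μ|)) (Ici x) := by
  have h0 : IntegrableOn (fun y : ℝ => Real.exp (-(k*y))) (Ici x) := by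
    rw [integrableOn_Ici_iff_integrableOn_Ioi]
    simpa [neg_mul] using exp_neg_integrableOn_Ioi x hk
  have h : IntegrableOn (fun y => (k/2) * Real.exp (k*μ) * Real.exp (-(k*y))) (Ici x) :=
    h0.const_mul _
  refine h.congr_fun (fun y hy => ?_) measurableSet_Ici
  dsimp only
  rw [abs_of_nonneg (by linarith [mem_Ici.mp hy] : (0:ℝ) ≤ y - μ), mul_assoc, ← Real.exp_add]
  congr 1; ring

lemma aux_inner_Ici {k μ : ℝ} (hk : 0 < k) {x : ℝ} (hx : μ ≤ x) :
    (∫ y in Set.Ici x, (k / 2) * Real.exp (-k * |y - μ|)) = Real.exp (-(k*(x-μ))) / 2 := by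
  have h1 : EqOn (fun y => (k/2) * Real.exp (-k * |y - μ|))
      (fun y => (k/2) * Real.exp (k*μ) * Real.exp (-(k*y))) (Ici x) := by
    intro y hy
    simp only
    rw [abs_of_nonneg (by linarith [mem_Ici.mp hy] : (0:ℝ) ≤ y - μ), mul_assoc, ← Real.exp_add]
    congr 2; ring
  rw [setIntegral_congr_fun measurableSet_Ici h1, integral_Ici_eq_integral_Ioi,
    MeasureTheory.integral_const_mul, aux_int_Ioi hk]
  have hE : Real.exp (k*μ) * Real.exp (-(k*x)) = Real.exp (-(k*(x-μ))) := by
    rw [← Real.exp_add]; congr 1; ring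
  rw [show k / 2 * Real.exp (k*μ) * (Real.exp (-(k*x)) / k)
      = Real.exp (k*μ) * Real.exp (-(k*x)) / 2 * (k / k) by ring,
    div_self hk.ne', mul_one, hE]

lemma aux_inner_eq {k μ : ℝ} (hk : 0 < k) (x : ℝ) :
    (∫ y in Set.Ici x, (k / 2) * Real.exp (-k * |y - μ|))
      = if x ≤ μ then 1 - Real.exp (k*(x-μ)) / 2 else Real.exp (-(k*(x-μ))) / 2 := by
  by_cases hx : x ≤ μ
  · rw [if_pos hx]
    have hsplit : Ici x = Ico x μ ∪ Ici μ := (Ico_union_Ici_eq_Ici hx).symm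
    have hdisj : Disjoint (Ico x μ) (Ici μ) :=
      disjoint_left.mpr fun y hy hy' => hy.2.not_ge hy'
    have hint1 : IntegrableOn (fun y => (k/2) * Real.exp (-k * |y - μ|)) (Ico x μ) := by
      exact ((by fun_prop : Continuous fun y : ℝ => (k/2) * Real.exp (-k * |y - μ|)).integrableOn_Icc).mono_set Ico_subset_Icc_self
    rw [hsplit, setIntegral_union hdisj measurableSet_Ici hint1
      (aux_lap_integrableOn_Ici hk le_rfl), aux_inner_Ici hk le_rfl]
    have h1 : EqOn (fun y => (k/2) * Real.exp (-k * |y - μ|))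
        (fun y => (k/2) * Real.exp (-(k*μ)) * Real.exp (k*y)) (Ico x μ) := by
      intro y hy
      simp only
      rw [abs_of_nonpos (by linarith [hy.2] : y - μ ≤ 0), mul_assoc, ← Real.exp_add]
      congr 2; ring
    rw [setIntegral_congr_fun measurableSet_Ico h1, MeasureTheory.integral_const_mul,
      integral_Ico_eq_integral_Ioo, ← integral_Ioc_eq_integral_Ioo,
      ← intervalIntegral.integral_of_le hx, aux_intervalIntegral_exp hk.ne']
    have h2 : Real.exp (-(k*μ)) * Real.exp (k*μ) = 1 := by
      rw [← Real.exp_add]; simp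
    have h3 : Real.exp (-(k*μ)) * Real.exp (k*x) = Real.exp (k*(x-μ)) := by
      rw [← Real.exp_add]; congr 1; ring
    rw [show k / 2 * Real.exp (-(k*μ)) * ((Real.exp (k*μ) - Real.exp (k*x)) / k)
        = (Real.exp (-(k*μ)) * Real.exp (k*μ) - Real.exp (-(k*μ)) * Real.exp (k*x)) / 2 * (k/k)
        by ring, div_self hk.ne', mul_one, h2, h3]
    simp only [sub_self, mul_zero, neg_zero, Real.exp_zero]
    ring
  · rw [if_neg hx]
    exact aux_inner_Ici hk (le_of_not_ge hx)

/-- For independent X₁ ~ Lap(k, μ₁) and X₂ ~ Lap(k, μ₁+1):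
P(X₂ < X₁) = (1/2)·e^{-k}·(1 + k/2), and in particular it is ≤ that value. -/
theorem laplace_guard_fail_prob (k μ₁ μ₂ : ℝ) (hk : 0 < k) (hμ : μ₂ = μ₁ + 1) :
    (∫ x : ℝ, ((k / 2) * Real.exp (-k * |x - μ₂|)) *
        (∫ y in Set.Ici x, (k / 2) * Real.exp (-k * |y - μ₁|))) =
      (1 / 2) * Real.exp (-k) * (1 + k / 2) ∧
    (∫ x : ℝ, ((k / 2) * Real.exp (-k * |x - μ₂|)) *
        (∫ y in Set.Ici x, (k / 2) * Real.exp (-k * |y - μ₁|))) ≤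
      (1 / 2) * Real.exp (-k) * (1 + k / 2) := by
  subst hμ
  have h2k : (0:ℝ) < 2 * k := by linarith
  have key : (∫ x : ℝ, ((k / 2) * Real.exp (-k * |x - (μ₁ + 1)|)) *
      (∫ y in Set.Ici x, (k / 2) * Real.exp (-k * |y - μ₁|))) =
      (1 / 2) * Real.exp (-k) * (1 + k / 2) := by
    simp only [aux_inner_eq hk]
    set g : ℝ → ℝ := fun x => (k / 2) * Real.exp (-k * |x - (μ₁ + 1)|) *
      (if x ≤ μ₁ then 1 - Real.exp (k * (x - μ₁)) / 2 else Real.exp (-(k * (x - μ₁))) / 2)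
      with hg
    -- piece A : Iic μ₁
    have hAeq : Set.EqOn g (fun x => (k/2) * Real.exp (-(k*μ₁) - k) * Real.exp (k*x)
        - (k/4) * Real.exp (-(2*k*μ₁) - k) * Real.exp ((2*k)*x)) (Set.Iic μ₁) := by
      intro x hx
      have hx' : x ≤ μ₁ := hx
      simp only [hg, if_pos hx']
      rw [abs_of_nonpos (by linarith : x - (μ₁ + 1) ≤ 0)]
      have e1 : Real.exp (-(k*μ₁) - k) * Real.exp (k*x) = Real.exp (-k * -(x - (μ₁+1))) := by
        rw [← Real.exp_add]; congr 1; ring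
      have e2 : Real.exp (-(2*k*μ₁) - k) * Real.exp ((2*k)*x)
          = Real.exp (-k * -(x - (μ₁+1))) * Real.exp (k * (x - μ₁)) := by
        rw [← Real.exp_add, ← Real.exp_add]; congr 1; ring
      linear_combination (-(k/2)) * e1 + (k/4) * e2
    have hAint1 : MeasureTheory.IntegrableOn
        (fun x : ℝ => (k/2) * Real.exp (-(k*μ₁) - k) * Real.exp (k*x)) (Set.Iic μ₁) :=
      (aux_integrableOn_exp_Iic hk μ₁).const_mul _
    have hAint2 : MeasureTheory.IntegrableOn
        (fun x : ℝ => (k/4) * Real.exp (-(2*k*μ₁) - k) * Real.exp ((2*k)*x)) (Set.Iic μ₁) :=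
      (aux_integrableOn_exp_Iic h2k μ₁).const_mul _
    have hAint : MeasureTheory.IntegrableOn g (Set.Iic μ₁) := by
      have h : MeasureTheory.IntegrableOn (fun x : ℝ =>
          (k/2) * Real.exp (-(k*μ₁) - k) * Real.exp (k*x)
          - (k/4) * Real.exp (-(2*k*μ₁) - k) * Real.exp ((2*k)*x)) (Set.Iic μ₁) :=
        hAint1.sub hAint2
      exact h.congr_fun hAeq.symm measurableSet_Iic
    have hAval : (∫ x in Set.Iic μ₁, g x) = 3/8 * Real.exp (-k) := by
      rw [MeasureTheory.setIntegral_congr_fun measurableSet_Iic hAeq,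
        MeasureTheory.integral_sub hAint1 hAint2, MeasureTheory.integral_const_mul,
        MeasureTheory.integral_const_mul, aux_int_Iic hk, aux_int_Iic h2k]
      have e3 : Real.exp (-(k*μ₁) - k) * Real.exp (k*μ₁) = Real.exp (-k) := by
        rw [← Real.exp_add]; congr 1; ring
      have e4 : Real.exp (-(2*k*μ₁) - k) * Real.exp ((2*k)*μ₁) = Real.exp (-k) := by
        rw [← Real.exp_add]; congr 1; ring
      rw [show k / 2 * Real.exp (-(k*μ₁) - k) * (Real.exp (k*μ₁) / k)
          - k / 4 * Real.exp (-(2*k*μ₁) - k) * (Real.exp ((2*k)*μ₁) / (2*k))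
          = (Real.exp (-(k*μ₁) - k) * Real.exp (k*μ₁) / 2
            - Real.exp (-(2*k*μ₁) - k) * Real.exp ((2*k)*μ₁) / 8) * (k/k) by ring,
        div_self hk.ne', mul_one, e3, e4]
      ring
    -- piece B : Ioc μ₁ (μ₁+1)
    have hBeq : Set.EqOn g (fun _ => (k/4) * Real.exp (-k)) (Set.Ioc μ₁ (μ₁+1)) := by
      intro x hx
      simp only [hg, if_neg (not_le.mpr hx.1)]
      rw [abs_of_nonpos (by linarith [hx.2] : x - (μ₁ + 1) ≤ 0)]
      have e5 : Real.exp (-k * -(x - (μ₁+1))) * Real.exp (-(k * (x - μ₁))) = Real.exp (-k) := by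
        rw [← Real.exp_add]; congr 1; ring
      linear_combination (k/4) * e5
    have hBint : MeasureTheory.IntegrableOn g (Set.Ioc μ₁ (μ₁+1)) := by
      refine (MeasureTheory.integrableOn_const measure_Ioc_lt_top.ne).congr_fun
        hBeq.symm measurableSet_Ioc
    have hBval : (∫ x in Set.Ioc μ₁ (μ₁+1), g x) = k/4 * Real.exp (-k) := by
      rw [MeasureTheory.setIntegral_congr_fun measurableSet_Ioc hBeq,
        MeasureTheory.setIntegral_const]
      simp [Real.volume_Ioc]
    -- piece C : Ioi (μ₁+1)
    have hCeq : Set.EqOn g (fun x => (k/4) * Real.exp (k*μ₁ + k*(μ₁+1)) *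
        Real.exp (-((2*k)*x))) (Set.Ioi (μ₁+1)) := by
      intro x hx
      have hx1 : μ₁ + 1 < x := hx
      simp only [hg, if_neg (by linarith : ¬ x ≤ μ₁)]
      rw [abs_of_nonneg (by linarith : (0:ℝ) ≤ x - (μ₁ + 1))]
      have e6 : Real.exp (k*μ₁ + k*(μ₁+1)) * Real.exp (-((2*k)*x))
          = Real.exp (-k * (x - (μ₁+1))) * Real.exp (-(k * (x - μ₁))) := by
        rw [← Real.exp_add, ← Real.exp_add]; congr 1; ring
      linear_combination (-(k/4)) * e6
    have hCint0 : MeasureTheory.IntegrableOn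
        (fun x : ℝ => Real.exp (-((2*k)*x))) (Set.Ioi (μ₁+1)) := by
      simpa [neg_mul] using exp_neg_integrableOn_Ioi (μ₁+1) h2k
    have hCint : MeasureTheory.IntegrableOn g (Set.Ioi (μ₁+1)) := by
      have h : MeasureTheory.IntegrableOn (fun x : ℝ => (k/4) * Real.exp (k*μ₁ + k*(μ₁+1)) *
          Real.exp (-((2*k)*x))) (Set.Ioi (μ₁+1)) := hCint0.const_mul _
      exact h.congr_fun hCeq.symm measurableSet_Ioi
    have hCval : (∫ x in Set.Ioi (μ₁+1), g x) = 1/8 * Real.exp (-k) := by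
      rw [MeasureTheory.setIntegral_congr_fun measurableSet_Ioi hCeq,
        MeasureTheory.integral_const_mul, aux_int_Ioi h2k]
      have e7 : Real.exp (k*μ₁ + k*(μ₁+1)) * Real.exp (-((2*k)*(μ₁+1))) = Real.exp (-k) := by
        rw [← Real.exp_add]; congr 1; ring
      rw [show k / 4 * Real.exp (k*μ₁ + k*(μ₁+1)) * (Real.exp (-((2*k)*(μ₁+1))) / (2*k))
          = Real.exp (k*μ₁ + k*(μ₁+1)) * Real.exp (-((2*k)*(μ₁+1))) / 8 * (k/k) by ring,
        div_self hk.ne', mul_one, e7]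
      ring
    -- assemble
    have hsplit2 : Set.Ioc μ₁ (μ₁+1) ∪ Set.Ioi (μ₁+1) = Set.Ioi μ₁ :=
      Set.Ioc_union_Ioi_eq_Ioi (by linarith)
    have hdisj : Disjoint (Set.Ioc μ₁ (μ₁+1)) (Set.Ioi (μ₁+1)) :=
      Set.disjoint_left.mpr fun y hy hy' => hy.2.not_gt hy'
    have hIoi : MeasureTheory.IntegrableOn g (Set.Ioi μ₁) := by
      rw [← hsplit2, MeasureTheory.integrableOn_union]
      exact ⟨hBint, hCint⟩
    have htot : (∫ x : ℝ, g x)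
        = (∫ x in Set.Iic μ₁, g x) + (∫ x in Set.Ioi μ₁, g x) :=
      (intervalIntegral.integral_Iic_add_Ioi hAint hIoi).symm
    have hIoival : (∫ x in Set.Ioi μ₁, g x)
        = (∫ x in Set.Ioc μ₁ (μ₁+1), g x) + (∫ x in Set.Ioi (μ₁+1), g x) := by
      rw [← hsplit2, MeasureTheory.setIntegral_union hdisj measurableSet_Ioi hBint hCint]
    rw [htot, hIoival, hAval, hBval, hCval]
    ring
  exact ⟨key, key.le⟩
end

section
/- Let ε > 0 and d > 0, and fix y > 0. Then P(X ≥ y) for X ~ Lap(dε, 1/2) is at least e^{(1/2)dε} times P(X' ≥ y) for X' ~ Lap(dε, -1/2). -/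
open MeasureTheory Real Set Filter

set_option maxHeartbeats 1000000

lemma lap_integrableOn (k μ a : ℝ) (hk : 0 < k) :
    IntegrableOn (fun z => (k / 2) * Real.exp (-k * |z - μ|)) (Set.Ici a) := by
  have hg : IntegrableOn (fun z => (k / 2) * Real.exp (k * μ) * Real.exp (-k * z))
      (Set.Ici a) := by
    rw [integrableOn_Ici_iff_integrableOn_Ioi]
    exact (exp_neg_integrableOn_Ioi a hk).const_mul _
  refine Integrable.mono hg ?_ ?_
  · exact (Continuous.aestronglyMeasurable (by fun_prop)).restrict
  · refine Filter.Eventually.of_forall fun z => ?_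
    have h1 : (0:ℝ) ≤ (k / 2) * Real.exp (-k * |z - μ|) := by positivity
    have h2 : (0:ℝ) ≤ (k / 2) * Real.exp (k * μ) * Real.exp (-k * z) := by positivity
    rw [Real.norm_eq_abs, Real.norm_eq_abs, abs_of_nonneg h1, abs_of_nonneg h2,
      mul_assoc, ← Real.exp_add]
    have h3 : z - μ ≤ |z - μ| := le_abs_self _
    exact mul_le_mul_of_nonneg_left (Real.exp_le_exp.mpr (by nlinarith)) (by positivity)

lemma lap_tail (k μ a : ℝ) (hk : 0 < k) (ha : μ ≤ a) :
    ∫ z in Set.Ici a, (k / 2) * Real.exp (-k * |z - μ|)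
      = (1 / 2) * Real.exp (-k * (a - μ)) := by
  rw [MeasureTheory.integral_Ici_eq_integral_Ioi]
  have hcong : ∀ z ∈ Set.Ioi a, (k / 2) * Real.exp (-k * |z - μ|)
      = (k / 2) * Real.exp (-k * (z - μ)) := by
    intro z hz
    rw [abs_of_nonneg (by simp only [Set.mem_Ioi] at hz; linarith)]
  rw [setIntegral_congr_fun measurableSet_Ioi hcong]
  have hint : IntegrableOn (fun z => (k / 2) * Real.exp (-k * (z - μ))) (Set.Ioi a) := by
    have : IntegrableOn (fun z => (k / 2) * Real.exp (k * μ) * Real.exp (-k * z))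
        (Set.Ioi a) := (exp_neg_integrableOn_Ioi a hk).const_mul _
    refine this.congr_fun (fun z _ => ?_) measurableSet_Ioi
    beta_reduce; rw [mul_assoc, ← Real.exp_add]; ring_nf
  have hderiv : ∀ z ∈ Set.Ici a,
      HasDerivAt (fun z => -(1 / 2) * Real.exp (-k * (z - μ)))
        ((k / 2) * Real.exp (-k * (z - μ))) z := by
    intro z _
    have h1 : HasDerivAt (fun z : ℝ => -k * (z - μ)) (-k) z := by
      simpa using ((hasDerivAt_id z).sub_const μ).const_mul (-k)
    have := (h1.exp).const_mul (-(1 / 2) : ℝ)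
    exact this.congr_deriv (by ring)
  have htend : Tendsto (fun z => -(1 / 2) * Real.exp (-k * (z - μ))) atTop (nhds 0) := by
    have hb : Tendsto (fun z : ℝ => z - μ) atTop atTop :=
      tendsto_atTop_add_const_right _ (-μ) tendsto_id
    have : Tendsto (fun z : ℝ => -k * (z - μ)) atTop atBot :=
      hb.const_mul_atTop_of_neg (by linarith)
    have := (Real.tendsto_exp_atBot.comp this).const_mul (-(1 / 2) : ℝ)
    simpa using this
  rw [MeasureTheory.integral_Ioi_of_hasDerivAt_of_tendsto' hderiv hint htend]
  ring

/-- For y > 0: P(X ≥ y) for X ~ Lap(dε, 1/2) is at least e^{dε/2} times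
P(X' ≥ y) for X' ~ Lap(dε, -1/2). -/
theorem laplace_upper_tail_ratio (d ε : ℝ) (hd : 0 < d) (hε : 0 < ε) (y : ℝ)
    (hy : 0 < y) :
    (∫ z in Set.Ici y, (d * ε / 2) * Real.exp (-(d * ε) * |z - 1 / 2|)) ≥
      Real.exp (d * ε / 2) *
        ∫ z in Set.Ici y, (d * ε / 2) * Real.exp (-(d * ε) * |z - (-(1 / 2))|) := by
  set k := d * ε with hkdef
  have hk : 0 < k := by positivity
  have hR : ∫ z in Set.Ici y, (k / 2) * Real.exp (-k * |z - (-(1 / 2))|)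
      = (1 / 2) * Real.exp (-k * (y - (-(1 / 2)))) := lap_tail k (-(1/2)) y hk (by linarith)
  rw [hR]
  have hRHS : Real.exp (k / 2) * ((1 / 2) * Real.exp (-k * (y - (-(1 / 2)))))
      = (1 / 2) * Real.exp (-k * y) := by
    rw [mul_comm (Real.exp (k / 2)), mul_assoc, ← Real.exp_add]
    ring_nf
  rw [hRHS]
  rcases le_or_gt (1 / 2 : ℝ) y with hcase | hcase
  · rw [lap_tail k (1/2) y hk hcase]
    have : -k * y ≤ -k * (y - 1 / 2) := by nlinarith
    have := Real.exp_le_exp.mpr this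
    nlinarith
  · have h1 : ∫ z in Set.Ici (1/2 : ℝ), (k / 2) * Real.exp (-k * |z - 1 / 2|)
        ≤ ∫ z in Set.Ici y, (k / 2) * Real.exp (-k * |z - 1 / 2|) := by
      apply setIntegral_mono_set (lap_integrableOn k (1/2) y hk)
      · exact Filter.Eventually.of_forall fun z => by positivity
      · exact HasSubset.Subset.eventuallyLE (Set.Ici_subset_Ici.mpr hcase.le)
    rw [lap_tail k (1/2) (1/2) hk le_rfl] at h1
    simp only [sub_self, mul_zero, Real.exp_zero, mul_one] at h1
    have h2 : Real.exp (-k * y) ≤ 1 := by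
      apply Real.exp_le_one_iff.mpr; nlinarith
    rw [ge_iff_le]
    calc (1:ℝ) / 2 * Real.exp (-k * y) ≤ 1 / 2 := by nlinarith
      _ ≤ _ := h1
end
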